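/- arXiv:1001.4025 — 6 statements merged into one kernel-verified Lean document; each statement's English description precedes it below -/
import Mathlib

section
/- (Theorem 1) The curve γ defines an elastic strip with multiplier μ (i.e. f₁ ≡ 0 and f₂ ≡ 0 on [0,L]) if and only if the force vector b₀ = a₁T + a₂N + a₃B is constant on [0,L]. -/
open scoped RealInnerProductSpace ContDiff
open Set Matrix

noncomputable section

/-- Euclidean 3-space. -/
abbrev E3 : Type := EuclideanSpace ℝ (Fin 3)

/-- Cross product on `E3`. -/
def cross (v w : E3) : E3 :=
  (WithLp.equiv 2 (Fin 3 → ℝ)).symm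
    (crossProduct ((WithLp.equiv 2 (Fin 3 → ℝ)) v) ((WithLp.equiv 2 (Fin 3 → ℝ)) w))

/-- `a₁ = ½(κ²(1+λ²)² + μ)`. -/
def a1 (κ lam : ℝ → ℝ) (μ : ℝ) (s : ℝ) : ℝ :=
  (κ s ^ 2 * (1 + lam s ^ 2) ^ 2 + μ) / 2

/-- `a₂ = κ'(1+λ²)² + 2κ(1+λ²)λλ'`. -/
def a2 (κ lam : ℝ → ℝ) (s : ℝ) : ℝ :=
  deriv κ s * (1 + lam s ^ 2) ^ 2 + 2 * κ s * (1 + lam s ^ 2) * lam s * deriv lam s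

/-- `a₃ = −(κ²(1+λ²)²λ + ((κ'/κ)·2λ(1+λ²))' + (2λ(1+λ²))'')`. -/
def a3 (κ lam : ℝ → ℝ) (s : ℝ) : ℝ :=
  -(κ s ^ 2 * (1 + lam s ^ 2) ^ 2 * lam s
    + deriv (fun u => deriv κ u / κ u * (2 * lam u * (1 + lam u ^ 2))) s
    + deriv (deriv (fun u => 2 * lam u * (1 + lam u ^ 2))) s)

/-- Euler–Lagrange expression `f₁ = a₂' + κa₁ − κλa₃`. -/
def f1 (κ lam : ℝ → ℝ) (μ : ℝ) (s : ℝ) : ℝ :=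
  deriv (a2 κ lam) s + κ s * a1 κ lam μ s - κ s * lam s * a3 κ lam s

/-- Euler–Lagrange expression `f₂ = a₃' + κλa₂`. -/
def f2 (κ lam : ℝ → ℝ) (s : ℝ) : ℝ :=
  deriv (a3 κ lam) s + κ s * lam s * a2 κ lam s

/-- `s₁ = 2κλ(1+λ²)`. -/
def s1 (κ lam : ℝ → ℝ) (s : ℝ) : ℝ := 2 * κ s * lam s * (1 + lam s ^ 2)

/-- `s₂ = s₁'/κ`. -/
def s2 (κ lam : ℝ → ℝ) (s : ℝ) : ℝ := deriv (s1 κ lam) s / κ s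

/-- `s₃ = κ(1+λ²)(1−λ²)`. -/
def s3 (κ lam : ℝ → ℝ) (s : ℝ) : ℝ := κ s * (1 + lam s ^ 2) * (1 - lam s ^ 2)

/-- The force vector `b₀ = a₁T + a₂N + a₃B`. -/
def b0vec (κ lam : ℝ → ℝ) (μ : ℝ) (T N B : ℝ → E3) (s : ℝ) : E3 :=
  a1 κ lam μ s • T s + a2 κ lam s • N s + a3 κ lam s • B s

/-- `J = s₁T + s₂N + s₃B`. -/
def Jvec (κ lam : ℝ → ℝ) (T N B : ℝ → E3) (s : ℝ) : E3 :=
  s1 κ lam s • T s + s2 κ lam s • N s + s3 κ lam s • B s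

/-- The torque vector `b₁ = J − γ × b₀`. -/
def b1vec (κ lam : ℝ → ℝ) (μ : ℝ) (γ T N B : ℝ → E3) (s : ℝ) : E3 :=
  Jvec κ lam T N B s - cross (γ s) (b0vec κ lam μ T N B s)

def eL : E3 ≃ₗ[ℝ] (Fin 3 → ℝ) := WithLp.linearEquiv 2 ℝ (Fin 3 → ℝ)

def crossLin : E3 →ₗ[ℝ] E3 →ₗ[ℝ] E3 :=
  (((crossProduct (R := ℝ)).compl₁₂ eL.toLinearMap eL.toLinearMap).compr₂ eL.symm.toLinearMap)

def crossCLM : E3 →L[ℝ] E3 →L[ℝ] E3 :=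
  LinearMap.toContinuousLinearMap
    ((LinearMap.toContinuousLinearMap (𝕜 := ℝ) (E := E3) (F' := E3)).toLinearMap.comp crossLin)

lemma cross_eq (v w : E3) : cross v w = crossCLM v w := rfl

attribute [irreducible] crossCLM

lemma inner_eq_dot (v w : E3) :
    ⟪v, w⟫ = (WithLp.equiv 2 (Fin 3 → ℝ) v) ⬝ᵥ (WithLp.equiv 2 (Fin 3 → ℝ) w) := by
  simp [PiLp.inner_apply, dotProduct, RCLike.inner_apply, mul_comm]



/-- **Theorem 1.** The curve `γ` defines an elastic strip with multiplier `μ`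
(i.e. `f₁ ≡ 0` and `f₂ ≡ 0` on `[0,L]`) iff the force vector `b₀ = a₁T + a₂N + a₃B`
is constant on `[0,L]`. -/
theorem stmt1
    (L : ℝ) (hL : 0 < L)
    (γ T N B : ℝ → E3) (κ τ lam : ℝ → ℝ) (μ : ℝ)
    (hγ : ContDiff ℝ (⊤ : ℕ∞) γ) (hκsm : ContDiff ℝ (⊤ : ℕ∞) κ) (hτsm : ContDiff ℝ (⊤ : ℕ∞) τ)
    (hT : ∀ s, T s = deriv γ s)
    (hunit : ∀ s, ‖deriv γ s‖ = 1)
    (hκ : ∀ s, κ s = ‖deriv (deriv γ) s‖)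
    (hκpos : ∀ s, 0 < κ s)
    (hN : ∀ s, N s = (κ s)⁻¹ • deriv T s)
    (hB : ∀ s, B s = cross (T s) (N s))
    (hfrN : ∀ s, deriv N s = (-(κ s)) • T s + τ s • B s)
    (hfrB : ∀ s, deriv B s = (-(τ s)) • N s)
    (hlam : ∀ s, lam s = τ s / κ s) :
    (∀ s ∈ Set.Icc (0 : ℝ) L, f1 κ lam μ s = 0 ∧ f2 κ lam s = 0) ↔
      (∃ c : E3, ∀ s ∈ Set.Icc (0 : ℝ) L, b0vec κ lam μ T N B s = c) := by
  -- basic facts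
  have hκ0 : ∀ s, κ s ≠ 0 := fun s => (hκpos s).ne'
  have hκI : ContDiff ℝ ∞ κ := hκsm.of_le (by simp)
  have hτI : ContDiff ℝ ∞ τ := hτsm.of_le (by simp)
  have hγI : ContDiff ℝ ∞ γ := hγ.of_le (by simp)
  have hlamf : lam = fun s => τ s / κ s := funext hlam
  have hlam_sm : ContDiff ℝ ∞ lam := by rw [hlamf]; exact hτI.div hκI hκ0
  have hτκ : ∀ s, τ s = κ s * lam s := by
    intro s; rw [hlam s, mul_comm, div_mul_cancel₀ _ (hκ0 s)]
  have hTf : T = deriv γ := funext hT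
  have hγd : ContDiff ℝ ∞ (deriv γ) := (contDiff_infty_iff_deriv.mp hγI).2
  have hT_sm : ContDiff ℝ ∞ T := by rw [hTf]; exact hγd
  have hT'f : deriv T = deriv (deriv γ) := by rw [hTf]
  have hT'_sm : ContDiff ℝ ∞ (deriv T) := by
    rw [hT'f]; exact (contDiff_infty_iff_deriv.mp hγd).2
  have hNf : N = fun s => (κ s)⁻¹ • deriv T s := funext hN
  have hN_sm : ContDiff ℝ ∞ N := by rw [hNf]; exact (hκI.inv hκ0).smul hT'_sm
  have hBf : B = fun s => crossCLM (T s) (N s) := funext fun s => (hB s).trans (cross_eq _ _)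
  have hB_sm : ContDiff ℝ ∞ B := by
    rw [hBf]
    exact (crossCLM.isBoundedBilinearMap.contDiff).comp (ContDiff.prodMk hT_sm hN_sm)

  have hone : (∞ : WithTop ℕ∞) ≠ 0 := by simp
  -- scalar smoothness
  have hκ'_sm : ContDiff ℝ ∞ (deriv κ) := (contDiff_infty_iff_deriv.mp hκI).2
  have hlam'_sm : ContDiff ℝ ∞ (deriv lam) := (contDiff_infty_iff_deriv.mp hlam_sm).2
  have hsq : ContDiff ℝ ∞ (fun s => (1 + lam s ^ 2) ^ 2) :=
    ((contDiff_const.add (hlam_sm.pow 2)).pow 2)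
  have ha1_sm : ContDiff ℝ ∞ (a1 κ lam μ) := by
    unfold a1
    exact (((hκI.pow 2).mul hsq).add contDiff_const).div_const 2
  have ha2_sm : ContDiff ℝ ∞ (a2 κ lam) := by
    unfold a2
    exact (hκ'_sm.mul hsq).add
      ((((contDiff_const.mul hκI).mul (contDiff_const.add (hlam_sm.pow 2))).mul hlam_sm).mul hlam'_sm)
  have hin2 : ContDiff ℝ ∞ (fun u => 2 * lam u * (1 + lam u ^ 2)) :=
    (contDiff_const.mul hlam_sm).mul (contDiff_const.add (hlam_sm.pow 2))
  have hin1 : ContDiff ℝ ∞ (fun u => deriv κ u / κ u * (2 * lam u * (1 + lam u ^ 2))) :=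
    (hκ'_sm.div hκI hκ0).mul hin2
  have ha3_sm : ContDiff ℝ ∞ (a3 κ lam) := by
    unfold a3
    exact (((((hκI.pow 2).mul hsq).mul hlam_sm).add (contDiff_infty_iff_deriv.mp hin1).2).add
      (contDiff_infty_iff_deriv.mp (contDiff_infty_iff_deriv.mp hin2).2).2).neg
  -- derivative facts
  have ha1d : ∀ s, HasDerivAt (a1 κ lam μ) (κ s * a2 κ lam s) s := by
    intro s
    have hκd : HasDerivAt κ (deriv κ s) s := (hκI.differentiable hone s).hasDerivAt
    have hld : HasDerivAt lam (deriv lam s) s := (hlam_sm.differentiable hone s).hasDerivAt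
    have h := ((((hκd.pow 2).mul (((hld.pow 2).const_add 1).pow 2)).add_const μ).div_const 2)
    refine h.congr_deriv ?_
    unfold a2
    simp only [Pi.pow_apply, Pi.mul_apply]
    push_cast
    ring
  have hTd : ∀ s, HasDerivAt T (κ s • N s) s := by
    intro s
    have h1 : HasDerivAt T (deriv T s) s := (hT_sm.differentiable hone s).hasDerivAt
    have h2 : κ s • N s = deriv T s := by
      rw [hN s, smul_smul, mul_inv_cancel₀ (hκ0 s), one_smul]
    rw [h2]; exact h1
  have hNd : ∀ s, HasDerivAt N ((-(κ s)) • T s + τ s • B s) s := fun s =>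
    (hfrN s) ▸ ((hN_sm.differentiable hone s).hasDerivAt)
  have hBd : ∀ s, HasDerivAt B ((-(τ s)) • N s) s := fun s =>
    (hfrB s) ▸ ((hB_sm.differentiable hone s).hasDerivAt)
  have ha2d : ∀ s, HasDerivAt (a2 κ lam) (deriv (a2 κ lam) s) s := fun s =>
    (ha2_sm.differentiable hone s).hasDerivAt
  have ha3d : ∀ s, HasDerivAt (a3 κ lam) (deriv (a3 κ lam) s) s := fun s =>
    (ha3_sm.differentiable hone s).hasDerivAt
  -- derivative of b0
  have hb0d : ∀ s, HasDerivAt (b0vec κ lam μ T N B)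
      (f1 κ lam μ s • N s + f2 κ lam s • B s) s := by
    intro s
    have h := (((ha1d s).smul (hTd s)).add ((ha2d s).smul (hNd s))).add ((ha3d s).smul (hBd s))
    have hfun : b0vec κ lam μ T N B =
        fun u => a1 κ lam μ u • T u + a2 κ lam u • N u + a3 κ lam u • B u := rfl
    rw [hfun]
    refine h.congr_deriv ?_
    simp only [f1, f2, hτκ s]
    module
  -- orthonormality
  have hTnorm : ∀ s, ‖T s‖ = 1 := fun s => by rw [hT s]; exact hunit s
  have hNnorm : ∀ s, ‖N s‖ = 1 := by
    intro s
    have hd : ‖deriv T s‖ = κ s := by rw [hT'f]; exact (hκ s).symm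
    rw [hN s, norm_smul, Real.norm_eq_abs, abs_of_pos (inv_pos.mpr (hκpos s)), hd,
      inv_mul_cancel₀ (hκ0 s)]
  have hNN : ∀ s, ⟪N s, N s⟫ = 1 := fun s => by
    rw [real_inner_self_eq_norm_sq, hNnorm s]; norm_num
  have hTT : ∀ s, ⟪T s, T s⟫ = 1 := fun s => by
    rw [real_inner_self_eq_norm_sq, hTnorm s]; norm_num
  have hTT' : ∀ s, ⟪T s, deriv T s⟫ = 0 := by
    intro s
    have hTds : HasDerivAt T (deriv T s) s := (hT_sm.differentiable hone s).hasDerivAt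
    have h1 : HasDerivAt (fun t => ⟪T t, T t⟫) (⟪T s, deriv T s⟫ + ⟪deriv T s, T s⟫) s :=
      HasDerivAt.inner ℝ hTds hTds
    have h2 : HasDerivAt (fun t => ⟪T t, T t⟫) 0 s := by
      have he : (fun t => ⟪T t, T t⟫) = fun _ => (1:ℝ) := funext fun t => hTT t
      rw [he]; exact hasDerivAt_const s 1
    have h3 := h1.unique h2
    have h4 : ⟪deriv T s, T s⟫ = ⟪T s, deriv T s⟫ := real_inner_comm _ _
    linarith
  have hTN : ∀ s, ⟪T s, N s⟫ = 0 := fun s => by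
    rw [hN s, real_inner_smul_right, hTT' s, mul_zero]
  have hcr : ∀ s, (WithLp.equiv 2 (Fin 3 → ℝ)) (B s) =
      crossProduct ((WithLp.equiv 2 (Fin 3 → ℝ)) (T s)) ((WithLp.equiv 2 (Fin 3 → ℝ)) (N s)) :=
    fun s => by rw [hB s]; rfl
  have hNB : ∀ s, ⟪N s, B s⟫ = 0 := by
    intro s
    rw [inner_eq_dot, hcr s]
    exact dot_cross_self _ _
  have hBB : ∀ s, ⟪B s, B s⟫ = 1 := by
    intro s
    rw [inner_eq_dot, hcr s, cross_dot_cross]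
    have dTT := (inner_eq_dot (T s) (T s)).symm.trans (hTT s)
    have dNN := (inner_eq_dot (N s) (N s)).symm.trans (hNN s)
    have dTN := (inner_eq_dot (T s) (N s)).symm.trans (hTN s)
    have dNT : (WithLp.equiv 2 (Fin 3 → ℝ)) (N s) ⬝ᵥ (WithLp.equiv 2 (Fin 3 → ℝ)) (T s) = 0 :=
      (inner_eq_dot (N s) (T s)).symm.trans ((real_inner_comm _ _).trans (hTN s))
    rw [dTT, dNN, dTN, dNT]
    ring
  -- continuity of f1 f2
  have hf1c : Continuous (f1 κ lam μ) := by
    unfold f1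
    exact ((contDiff_infty_iff_deriv.mp ha2_sm).2.continuous.add
      (hκI.continuous.mul ha1_sm.continuous)).sub
      ((hκI.continuous.mul hlam_sm.continuous).mul ha3_sm.continuous)
  have hf2c : Continuous (f2 κ lam) := by
    unfold f2
    exact (contDiff_infty_iff_deriv.mp ha3_sm).2.continuous.add
      ((hκI.continuous.mul hlam_sm.continuous).mul ha2_sm.continuous)
  constructor
  · intro h
    refine ⟨b0vec κ lam μ T N B 0, ?_⟩
    exact constant_of_derivWithin_zero (a := 0) (b := L)
      (fun x _ => ((hb0d x).differentiableAt).differentiableWithinAt)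
      (fun x hx => by
        have h0 : HasDerivAt (b0vec κ lam μ T N B) 0 x := by
          have h' := hb0d x
          rwa [(h x (Ico_subset_Icc_self hx)).1, (h x (Ico_subset_Icc_self hx)).2,
            zero_smul, zero_smul, add_zero] at h'
        exact (h0.hasDerivWithinAt).derivWithin (uniqueDiffOn_Icc hL x (Ico_subset_Icc_self hx)))
  · rintro ⟨c, hc⟩
    have hIoo : ∀ x ∈ Ioo (0:ℝ) L, f1 κ lam μ x = 0 ∧ f2 κ lam x = 0 := by
      intro x hx
      have h0 : HasDerivAt (b0vec κ lam μ T N B) 0 x := by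
        have hev : b0vec κ lam μ T N B =ᶠ[nhds x] fun _ => c := by
          filter_upwards [isOpen_Ioo.mem_nhds hx] with y hy
          exact hc y (Ioo_subset_Icc_self hy)
        exact (hasDerivAt_const x c).congr_of_eventuallyEq hev
      have heq : f1 κ lam μ x • N x + f2 κ lam x • B x = 0 := (hb0d x).unique h0
      have hBN : ⟪B x, N x⟫ = (0:ℝ) := (real_inner_comm _ _).trans (hNB x)
      have e1 : f1 κ lam μ x = 0 := by
        have h5 := congrArg (fun v => ⟪v, N x⟫) heq
        simp only [inner_add_left, real_inner_smul_left, inner_zero_left, hNN x, hBN,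
          mul_one, mul_zero, add_zero] at h5
        exact h5
      have e2 : f2 κ lam x = 0 := by
        have h5 := congrArg (fun v => ⟪v, B x⟫) heq
        simp only [inner_add_left, real_inner_smul_left, inner_zero_left, hBB x, hNB x,
          mul_one, mul_zero, zero_add] at h5
        exact h5
      exact ⟨e1, e2⟩
    intro s hs
    have hcl : s ∈ closure (Ioo (0:ℝ) L) := by rwa [closure_Ioo hL.ne]
    have hclosed : IsClosed {x | f1 κ lam μ x = 0 ∧ f2 κ lam x = 0} :=
      (isClosed_eq hf1c continuous_const).inter (isClosed_eq hf2c continuous_const)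
    exact (hclosed.closure_subset_iff.mpr (fun x hx => hIoo x hx)) hcl
end
end

section
/- With s₁, s₂, s₃, a₂, a₃ as defined, the identities κ·s₁ + s₂' − λκ·s₃ = −a₃ and s₃' + λκ·s₂ = a₂ hold at every point of [0,L]. -/
open scoped RealInnerProductSpace
open Set

noncomputable section

/-- With `s₁, s₂, s₃, a₂, a₃` as defined, the identities
`κ·s₁ + s₂' − λκ·s₃ = −a₃` and `s₃' + λκ·s₂ = a₂` hold at every point of `[0,L]`. -/
theorem stmt2
    (L : ℝ) (hL : 0 < L)
    (γ T N B : ℝ → E3) (κ τ lam : ℝ → ℝ)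
    (hγ : ContDiff ℝ (⊤ : ℕ∞) γ) (hκsm : ContDiff ℝ (⊤ : ℕ∞) κ) (hτsm : ContDiff ℝ (⊤ : ℕ∞) τ)
    (hT : ∀ s, T s = deriv γ s)
    (hunit : ∀ s, ‖deriv γ s‖ = 1)
    (hκ : ∀ s, κ s = ‖deriv (deriv γ) s‖)
    (hκpos : ∀ s, 0 < κ s)
    (hN : ∀ s, N s = (κ s)⁻¹ • deriv T s)
    (hB : ∀ s, B s = cross (T s) (N s))
    (hfrN : ∀ s, deriv N s = (-(κ s)) • T s + τ s • B s)
    (hfrB : ∀ s, deriv B s = (-(τ s)) • N s)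
    (hlam : ∀ s, lam s = τ s / κ s) :
    ∀ s ∈ Set.Icc (0 : ℝ) L,
      κ s * s1 κ lam s + deriv (s2 κ lam) s - lam s * κ s * s3 κ lam s = -(a3 κ lam s) ∧
      deriv (s3 κ lam) s + lam s * κ s * s2 κ lam s = a2 κ lam s := by
  have hne : ∀ u, κ u ≠ 0 := fun u => (hκpos u).ne'
  have hlamc : ContDiff ℝ (⊤ : ℕ∞) lam := by
    have : lam = fun u => τ u / κ u := funext hlam
    rw [this]; exact hτsm.div hκsm hne
  have hκd : Differentiable ℝ κ := hκsm.differentiable (by simp)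
  have hlamd : Differentiable ℝ lam := hlamc.differentiable (by simp)
  have hk : ∀ u, HasDerivAt κ (deriv κ u) u := fun u => (hκd u).hasDerivAt
  have hl : ∀ u, HasDerivAt lam (deriv lam u) u := fun u => (hlamd u).hasDerivAt
  -- derivative of g = 2λ(1+λ²)
  have hg : ∀ u, HasDerivAt (fun v => 2 * lam v * (1 + lam v ^ 2))
      (2 * deriv lam u * (1 + lam u ^ 2) + 2 * lam u * (2 * lam u ^ 1 * deriv lam u)) u :=
    fun u => ((hl u).const_mul 2).mul (((hl u).pow 2).const_add 1)
  -- derivative of s1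
  have hs1 : ∀ u, HasDerivAt (s1 κ lam)
      ((2 * deriv κ u * lam u + 2 * κ u * deriv lam u) * (1 + lam u ^ 2)
        + 2 * κ u * lam u * (2 * lam u ^ 1 * deriv lam u)) u :=
    fun u => (((hk u).const_mul 2).mul (hl u)).mul (((hl u).pow 2).const_add 1)
  -- derivative of s3
  have hs3 : ∀ u, HasDerivAt (s3 κ lam)
      ((deriv κ u * (1 + lam u ^ 2) + κ u * (2 * lam u ^ 1 * deriv lam u)) * (1 - lam u ^ 2)
        + κ u * (1 + lam u ^ 2) * (0 - 2 * lam u ^ 1 * deriv lam u)) u :=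
    fun u => ((hk u).mul (((hl u).pow 2).const_add 1)).mul
      ((hasDerivAt_const u (1:ℝ)).sub ((hl u).pow 2))
  -- s2 as an explicit sum
  have hs2eq : s2 κ lam = fun u =>
      deriv κ u / κ u * (2 * lam u * (1 + lam u ^ 2))
        + deriv (fun v => 2 * lam v * (1 + lam v ^ 2)) u := by
    funext u
    rw [s2, (hs1 u).deriv, (hg u).deriv]
    field_simp [hne u]
    ring
  -- differentiability of the two summands
  have hgsm : ContDiff ℝ (⊤ : ℕ∞) (fun v => 2 * lam v * (1 + lam v ^ 2)) :=
    (contDiff_const.mul hlamc).mul (contDiff_const.add (hlamc.pow 2))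
  have hle : (1 : WithTop ℕ∞) ≤ ((⊤ : ℕ∞) : WithTop ℕ∞) := by exact_mod_cast le_top
  have hdκ : ContDiff ℝ (⊤ : ℕ∞) (deriv κ) :=
    (contDiff_infty_iff_deriv.mp (hκsm.of_le (by simp))).2
  have h1d : Differentiable ℝ
      (fun u => deriv κ u / κ u * (2 * lam u * (1 + lam u ^ 2))) := fun u => (((hdκ.div (hκsm.of_le (by simp)) hne).mul (hgsm.of_le (by simp))).differentiable (by simp)) u
  have h2d : Differentiable ℝ (deriv (fun v => 2 * lam v * (1 + lam v ^ 2))) :=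
    (contDiff_infty_iff_deriv.mp (hgsm.of_le (by simp))).2.differentiable (by simp)
  intro s _
  have hds2 : deriv (s2 κ lam) s =
      deriv (fun u => deriv κ u / κ u * (2 * lam u * (1 + lam u ^ 2))) s
        + deriv (deriv (fun v => 2 * lam v * (1 + lam v ^ 2))) s := by
    rw [hs2eq]
    exact deriv_add (h1d s) (h2d s)
  constructor
  · rw [hds2, a3, s1, s3]
    ring
  · have hcan : lam s * κ s * s2 κ lam s = lam s * deriv (s1 κ lam) s := by
      rw [s2, mul_assoc, ← mul_div_assoc, mul_div_cancel_left₀ _ (hne s)]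
    rw [hcan, (hs3 s).deriv, (hs1 s).deriv, a2]
    ring
end
end

section
/- (Theorem 2, first part) The torque vector satisfies b₁'(s) = −γ(s) × b₀'(s) = −γ(s) × (f₁(s)N(s) + f₂(s)B(s)) for all s ∈ [0,L]; in particular, if γ defines an elastic strip with multiplier μ (f₁ ≡ 0 and f₂ ≡ 0), then b₁ is constant on [0,L]. -/
open scoped RealInnerProductSpace
open Set

noncomputable section

/-! ### Auxiliary lemmas on the cross product -/

lemma crossE3_apply (v w : E3) (i : Fin 3) : cross v w i =
    ![v 1 * w 2 - v 2 * w 1, v 2 * w 0 - v 0 * w 2, v 0 * w 1 - v 1 * w 0] i := by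
  simp [cross, crossProduct, WithLp.equiv]

lemma crossE3_add_right (u v w : E3) : cross u (v + w) = cross u v + cross u w := by
  ext i; fin_cases i <;> simp [crossE3_apply] <;> ring

lemma crossE3_smul_right (c : ℝ) (u v : E3) : cross u (c • v) = c • cross u v := by
  ext i; fin_cases i <;> simp [crossE3_apply] <;> ring

lemma crossE3_zero_right (u : E3) : cross u 0 = 0 := by
  ext i; fin_cases i <;> simp [crossE3_apply]

lemma crossE3_self (v : E3) : cross v v = 0 := by
  ext i; fin_cases i <;> simp [crossE3_apply] <;> ring

lemma crossE3_triple (v w : E3) : cross v (cross v w) = ⟪v, w⟫ • v - ⟪v, v⟫ • w := by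
  ext i
  have h : ∀ a b : E3, ⟪a,b⟫ = a 0 * b 0 + a 1 * b 1 + a 2 * b 2 := by
    intro a b
    simp [PiLp.inner_apply, RCLike.inner_apply, Fin.sum_univ_three]; ring
  rw [h v w, h v v]
  fin_cases i <;> simp [crossE3_apply, h, -real_inner_self_eq_norm_sq] <;> try ring

lemma hasDerivAt_E3 {f : ℝ → E3} {v : E3} {s : ℝ}
    (h : ∀ i, HasDerivAt (fun t => f t i) (v i) s) : HasDerivAt f v s := by
  have h2 : HasDerivAt (fun t => (fun i => f t i : Fin 3 → ℝ))
      ((PiLp.continuousLinearEquiv 2 ℝ (fun _ : Fin 3 => ℝ)) v) s := hasDerivAt_pi.2 h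
  have h3 := ((PiLp.continuousLinearEquiv 2 ℝ
      (fun _ : Fin 3 => ℝ)).symm.toContinuousLinearMap.hasFDerivAt).comp_hasDerivAt s h2
  exact h3

lemma hasDerivAt_proj {f : ℝ → E3} {v : E3} {s : ℝ} (hf : HasDerivAt f v s) (i : Fin 3) :
    HasDerivAt (fun t => f t i) (v i) s := by
  have := (EuclideanSpace.proj (𝕜 := ℝ) i).hasFDerivAt.comp_hasDerivAt s hf
  exact this

lemma hasDerivAt_cross {f g : ℝ → E3} {f' g' : E3} {s : ℝ}
    (hf : HasDerivAt f f' s) (hg : HasDerivAt g g' s) :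
    HasDerivAt (fun t => cross (f t) (g t)) (cross f' (g s) + cross (f s) g') s := by
  have hfi := fun i => hasDerivAt_proj hf i
  have hgi := fun i => hasDerivAt_proj hg i
  apply hasDerivAt_E3
  intro i
  have e1 : ∀ t, cross (f t) (g t) i = ![f t 1 * g t 2 - f t 2 * g t 1,
      f t 2 * g t 0 - f t 0 * g t 2, f t 0 * g t 1 - f t 1 * g t 0] i := fun t =>
    crossE3_apply _ _ i
  have e2 : (cross f' (g s) + cross (f s) g') i = cross f' (g s) i + cross (f s) g' i := rfl
  simp only [e1, e2, crossE3_apply]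
  fin_cases i <;>
    simp only [Matrix.cons_val_zero, Matrix.cons_val_one, Matrix.head_cons,
      Matrix.cons_val_two, Matrix.tail_cons] <;>
  · apply HasDerivAt.congr_deriv (((hfi _).mul (hgi _)).sub ((hfi _).mul (hgi _)))
    simp
    try ring

/-! ### Scalar calculus lemmas -/

lemma one_le_coe_top : (1 : WithTop ℕ∞) ≤ ((⊤:ℕ∞) : WithTop ℕ∞) := by exact_mod_cast le_top

lemma coe_top_ne_zero' : ((⊤:ℕ∞) : WithTop ℕ∞) ≠ 0 := by simp

/-- `g = 2λ(1+λ²)`. -/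
def gfun (lam : ℝ → ℝ) : ℝ → ℝ := fun u => 2 * lam u * (1 + lam u ^ 2)

/-- `F₁ = (κ'/κ)·g`. -/
def F1fun (κ lam : ℝ → ℝ) : ℝ → ℝ := fun u => deriv κ u / κ u * (2 * lam u * (1 + lam u ^ 2))

section Scalar

variable {κ lam : ℝ → ℝ} (hκ : ContDiff ℝ (⊤:ℕ∞) κ) (hlm : ContDiff ℝ (⊤:ℕ∞) lam) (hκ0 : ∀ x, κ x ≠ 0)
include hlm

lemma hasDerivAt_gfun (s : ℝ) :
    HasDerivAt (gfun lam) (2 * deriv lam s * (1 + lam s ^ 2)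
      + 2 * lam s * (2 * lam s * deriv lam s)) s := by
  have h := ((hlm.differentiable coe_top_ne_zero') s).hasDerivAt
  have h1 : HasDerivAt (fun u => 2 * lam u) (2 * deriv lam s) s := h.const_mul 2
  have h2 : HasDerivAt (fun u => 1 + lam u ^ 2)
      ((2 : ℕ) * lam s ^ (2 - 1) * deriv lam s) s := (h.pow 2).const_add 1
  have h3 := h1.mul h2
  apply h3.congr_deriv
  push_cast
  ring

include hκ

lemma hasDerivAt_a1 (μ : ℝ) (s : ℝ) :
    HasDerivAt (a1 κ lam μ) (κ s * a2 κ lam s) s := by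
  have hkd := ((hκ.differentiable coe_top_ne_zero') s).hasDerivAt
  have hld := ((hlm.differentiable coe_top_ne_zero') s).hasDerivAt
  have h2 : HasDerivAt (fun u => 1 + lam u ^ 2)
      ((2 : ℕ) * lam s ^ (2 - 1) * deriv lam s) s := (hld.pow 2).const_add 1
  have h3 := (hkd.pow 2).mul (h2.pow 2)
  have h4 := (h3.add_const μ).div_const 2
  apply h4.congr_deriv
  unfold a2
  simp only [Pi.pow_apply, Pi.mul_apply]
  push_cast
  ring

lemma hasDerivAt_s1 (s : ℝ) :
    HasDerivAt (s1 κ lam) (deriv κ s * gfun lam s + κ s * deriv (gfun lam) s) s := by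
  have hkd := ((hκ.differentiable coe_top_ne_zero') s).hasDerivAt
  have hg := hasDerivAt_gfun hlm s
  have heq : s1 κ lam = fun u => κ u * gfun lam u := by
    funext u; unfold s1 gfun; ring
  rw [heq]
  have := hkd.mul hg
  apply this.congr_deriv
  rw [(hasDerivAt_gfun hlm s).deriv]

lemma hasDerivAt_s3 (s : ℝ) :
    HasDerivAt (s3 κ lam)
      (deriv κ s * ((1 + lam s ^ 2) * (1 - lam s ^ 2))
        + κ s * (2 * lam s * deriv lam s * (1 - lam s ^ 2)
            + (1 + lam s ^ 2) * (-(2 * lam s * deriv lam s)))) s := by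
  have hkd := ((hκ.differentiable coe_top_ne_zero') s).hasDerivAt
  have hld := ((hlm.differentiable coe_top_ne_zero') s).hasDerivAt
  have h2 : HasDerivAt (fun u => 1 + lam u ^ 2)
      ((2 : ℕ) * lam s ^ (2 - 1) * deriv lam s) s := (hld.pow 2).const_add 1
  have h2' : HasDerivAt (fun u => 1 - lam u ^ 2)
      (-((2 : ℕ) * lam s ^ (2 - 1) * deriv lam s)) s := (hld.pow 2).const_sub 1
  have heq : s3 κ lam = fun u => κ u * ((1 + lam u ^ 2) * (1 - lam u ^ 2)) := by
    funext u; unfold s3; ring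
  rw [heq]
  apply (hkd.mul (h2.mul h2')).congr_deriv
  simp only [Pi.mul_apply]
  push_cast
  ring

include hκ0

lemma smooth_F1 : ContDiff ℝ (⊤:ℕ∞) (F1fun κ lam) := by
  have hκ' : ContDiff ℝ (⊤:ℕ∞) (deriv κ) := (contDiff_infty_iff_deriv.mp hκ).2
  exact (hκ'.div hκ hκ0).mul ((contDiff_const.mul hlm).mul
    (contDiff_const.add (hlm.pow 2)))

lemma smooth_g : ContDiff ℝ (⊤:ℕ∞) (gfun lam) :=
  (contDiff_const.mul hlm).mul (contDiff_const.add (hlm.pow 2))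

lemma s2_eq : s2 κ lam = fun u => F1fun κ lam u + deriv (gfun lam) u := by
  funext u
  unfold s2
  rw [(hasDerivAt_s1 hκ hlm u).deriv]
  have hF : F1fun κ lam u = deriv κ u / κ u * gfun lam u := rfl
  rw [hF, add_div, mul_div_cancel_left₀ _ (hκ0 u)]
  ring

lemma hasDerivAt_s2 (s : ℝ) :
    HasDerivAt (s2 κ lam)
      (deriv (F1fun κ lam) s + deriv (deriv (gfun lam)) s) s := by
  rw [s2_eq hκ hlm hκ0]
  have h1 : DifferentiableAt ℝ (F1fun κ lam) s :=
    ((smooth_F1 hκ hlm hκ0).differentiable coe_top_ne_zero') s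
  have h2 : DifferentiableAt ℝ (deriv (gfun lam)) s :=
    (((contDiff_infty_iff_deriv.mp (smooth_g hκ hlm hκ0)).2).differentiable coe_top_ne_zero') s
  exact h1.hasDerivAt.add h2.hasDerivAt

lemma diff_a2 (s : ℝ) : DifferentiableAt ℝ (a2 κ lam) s := by
  have hκ' : Differentiable ℝ (deriv κ) := ((contDiff_infty_iff_deriv.mp hκ).2).differentiable coe_top_ne_zero'
  have hlm' : Differentiable ℝ (deriv lam) := ((contDiff_infty_iff_deriv.mp hlm).2).differentiable coe_top_ne_zero'
  have hκd : Differentiable ℝ κ := hκ.differentiable coe_top_ne_zero'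
  have hlmd : Differentiable ℝ lam := hlm.differentiable coe_top_ne_zero'
  unfold a2
  fun_prop

lemma diff_a3 (s : ℝ) : DifferentiableAt ℝ (a3 κ lam) s := by
  have hF1' : Differentiable ℝ (deriv (F1fun κ lam)) :=
    ((contDiff_infty_iff_deriv.mp (smooth_F1 hκ hlm hκ0)).2).differentiable coe_top_ne_zero'
  have hg' : ContDiff ℝ (⊤:ℕ∞) (deriv (gfun lam)) :=
    (contDiff_infty_iff_deriv.mp (smooth_g hκ hlm hκ0)).2
  have hg'' : Differentiable ℝ (deriv (deriv (gfun lam))) :=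
    ((contDiff_infty_iff_deriv.mp hg').2).differentiable coe_top_ne_zero'
  have hκd : Differentiable ℝ κ := hκ.differentiable coe_top_ne_zero'
  have hlmd : Differentiable ℝ lam := hlm.differentiable coe_top_ne_zero'
  have : a3 κ lam = fun u => -(κ u ^ 2 * (1 + lam u ^ 2) ^ 2 * lam u
      + deriv (F1fun κ lam) u + deriv (deriv (gfun lam)) u) := by
    funext u; unfold a3 F1fun gfun; rfl
  rw [this]
  fun_prop

end Scalar

/-- **Theorem 2, first part.** The torque vector satisfies
`b₁'(s) = −γ(s) × b₀'(s) = −γ(s) × (f₁(s)N(s) + f₂(s)B(s))` for all `s ∈ [0,L]`;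
in particular if `γ` defines an elastic strip (`f₁ ≡ 0`, `f₂ ≡ 0`) then `b₁` is
constant on `[0,L]`. -/
theorem stmt3
    (L : ℝ) (hL : 0 < L)
    (γ T N B : ℝ → E3) (κ τ lam : ℝ → ℝ) (μ : ℝ)
    (hγ : ContDiff ℝ (⊤ : ℕ∞) γ) (hκsm : ContDiff ℝ (⊤ : ℕ∞) κ) (hτsm : ContDiff ℝ (⊤ : ℕ∞) τ)
    (hT : ∀ s, T s = deriv γ s)
    (hunit : ∀ s, ‖deriv γ s‖ = 1)
    (hκ : ∀ s, κ s = ‖deriv (deriv γ) s‖)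
    (hκpos : ∀ s, 0 < κ s)
    (hN : ∀ s, N s = (κ s)⁻¹ • deriv T s)
    (hB : ∀ s, B s = cross (T s) (N s))
    (hfrN : ∀ s, deriv N s = (-(κ s)) • T s + τ s • B s)
    (hfrB : ∀ s, deriv B s = (-(τ s)) • N s)
    (hlam : ∀ s, lam s = τ s / κ s) :
    (∀ s ∈ Set.Icc (0 : ℝ) L,
      deriv (b1vec κ lam μ γ T N B) s
          = -(cross (γ s) (deriv (b0vec κ lam μ T N B) s)) ∧
      deriv (b1vec κ lam μ γ T N B) s
          = -(cross (γ s) (f1 κ lam μ s • N s + f2 κ lam s • B s))) ∧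
    ((∀ s ∈ Set.Icc (0 : ℝ) L, f1 κ lam μ s = 0 ∧ f2 κ lam s = 0) →
      ∃ c : E3, ∀ s ∈ Set.Icc (0 : ℝ) L, b1vec κ lam μ γ T N B s = c) := by
  have hκ0 : ∀ x, κ x ≠ 0 := fun x => (hκpos x).ne'
  have hγ2 : ContDiff ℝ (⊤:ℕ∞) γ := hγ.of_le (by simp)
  have hκsm2 : ContDiff ℝ (⊤:ℕ∞) κ := hκsm.of_le (by simp)
  have hτsm2 : ContDiff ℝ (⊤:ℕ∞) τ := hτsm.of_le (by simp)
  have hlamf : lam = fun x => τ x / κ x := funext hlam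
  have hlamsm : ContDiff ℝ (⊤:ℕ∞) lam := by rw [hlamf]; exact hτsm2.div hκsm2 hκ0
  have hτeq : ∀ x, τ x = lam x * κ x := by
    intro x; rw [hlam x, div_mul_cancel₀ _ (hκ0 x)]
  have hTf : T = deriv γ := funext hT
  -- derivative of γ
  have hγd : ∀ x, HasDerivAt γ (T x) x := fun x => by
    rw [hT x]; exact ((hγ2.differentiable coe_top_ne_zero') x).hasDerivAt
  -- derivative of T
  have hγ' : ContDiff ℝ (⊤:ℕ∞) (deriv γ) := (contDiff_infty_iff_deriv.mp hγ2).2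
  have hTd : ∀ x, HasDerivAt T (κ x • N x) x := by
    intro x
    have h1 : HasDerivAt (deriv γ) (deriv (deriv γ) x) x :=
      ((hγ'.differentiable coe_top_ne_zero') x).hasDerivAt
    rw [hTf]
    apply h1.congr_deriv
    have h2 := hN x
    rw [hTf] at h2
    rw [h2, smul_smul, mul_inv_cancel₀ (hκ0 x), one_smul]
  -- differentiability of N and B
  have hNf : N = fun x => (κ x)⁻¹ • deriv (deriv γ) x := by
    funext x; rw [hN x, hTf]
  have hNdiff : Differentiable ℝ N := by
    rw [hNf]
    exact ((hκsm2.inv hκ0).differentiable coe_top_ne_zero').smul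
      (((contDiff_infty_iff_deriv.mp hγ').2).differentiable coe_top_ne_zero')
  have hNd : ∀ x, HasDerivAt N ((-(κ x)) • T x + τ x • B x) x := fun x => by
    have := (hNdiff x).hasDerivAt
    rwa [hfrN x] at this
  have hBdiff : ∀ x, DifferentiableAt ℝ B x := by
    intro x
    have : B = fun u => cross (T u) (N u) := funext hB
    rw [this]
    exact (hasDerivAt_cross (hTd x) (hNd x)).differentiableAt
  have hBd : ∀ x, HasDerivAt B ((-(τ x)) • N x) x := fun x => by
    have := (hBdiff x).hasDerivAt
    rwa [hfrB x] at this
  -- inner product facts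
  have hTT1 : ∀ x, ⟪T x, T x⟫ = (1 : ℝ) := by
    intro x
    rw [hT x, real_inner_self_eq_norm_sq, hunit x]
    norm_num
  have hTN0 : ∀ x, ⟪T x, N x⟫ = (0 : ℝ) := by
    intro x
    have hconst : (fun u => ⟪deriv γ u, deriv γ u⟫) = fun _ : ℝ => (1 : ℝ) := by
      funext u
      rw [real_inner_self_eq_norm_sq, hunit u]
      norm_num
    have h0 : HasDerivAt (fun u => ⟪deriv γ u, deriv γ u⟫) 0 x := by
      rw [hconst]; exact hasDerivAt_const x 1
    have hgd : ∀ u, HasDerivAt (deriv γ) (deriv (deriv γ) u) u := fun u =>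
      ((hγ'.differentiable coe_top_ne_zero') u).hasDerivAt
    have h1 : HasDerivAt (fun u => ⟪deriv γ u, deriv γ u⟫)
        (⟪deriv γ x, deriv (deriv γ) x⟫ + ⟪deriv (deriv γ) x, deriv γ x⟫) x :=
      (hgd x).inner ℝ (hgd x)
    have h2 := h1.unique h0
    have hc : ⟪deriv γ x, deriv (deriv γ) x⟫ = ⟪deriv (deriv γ) x, deriv γ x⟫ :=
      real_inner_comm _ _
    have h3 : ⟪deriv γ x, deriv (deriv γ) x⟫ = (0 : ℝ) := by linarith
    rw [hT x, hN x, hTf, real_inner_smul_right, h3, mul_zero]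
  -- T × B = -N
  have hTB : ∀ x, cross (T x) (B x) = -(N x) := by
    intro x
    rw [hB x, crossE3_triple, hTT1 x, hTN0 x]
    simp
  -- derivative of b0vec
  have hb0d : ∀ x, HasDerivAt (b0vec κ lam μ T N B)
      (f1 κ lam μ x • N x + f2 κ lam x • B x) x := by
    intro x
    have ha1 := hasDerivAt_a1 hκsm2 hlamsm μ x
    have ha2 : HasDerivAt (a2 κ lam) (deriv (a2 κ lam) x) x :=
      (diff_a2 hκsm2 hlamsm hκ0 x).hasDerivAt
    have ha3 : HasDerivAt (a3 κ lam) (deriv (a3 κ lam) x) x :=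
      (diff_a3 hκsm2 hlamsm hκ0 x).hasDerivAt
    have hb : HasDerivAt (b0vec κ lam μ T N B)
        (a1 κ lam μ x • (κ x • N x) + (κ x * a2 κ lam x) • T x
          + (a2 κ lam x • ((-(κ x)) • T x + τ x • B x) + deriv (a2 κ lam) x • N x)
          + (a3 κ lam x • ((-(τ x)) • N x) + deriv (a3 κ lam) x • B x)) x := by
      exact ((ha1.smul (hTd x)).add (ha2.smul (hNd x))).add (ha3.smul (hBd x))
    apply hb.congr_deriv
    rw [hτeq x]
    unfold f1 f2
    match_scalars <;> ring
  -- derivative of Jvec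
  have hJd : ∀ x, HasDerivAt (Jvec κ lam T N B)
      (cross (T x) (b0vec κ lam μ T N B x)) x := by
    intro x
    have hs1 := hasDerivAt_s1 hκsm2 hlamsm x
    have hs2 := hasDerivAt_s2 hκsm2 hlamsm hκ0 x
    have hs3 := hasDerivAt_s3 hκsm2 hlamsm x
    have hJ : HasDerivAt (Jvec κ lam T N B)
        (s1 κ lam x • (κ x • N x)
          + (deriv κ x * gfun lam x + κ x * deriv (gfun lam) x) • T x
          + (s2 κ lam x • ((-(κ x)) • T x + τ x • B x)
              + (deriv (F1fun κ lam) x + deriv (deriv (gfun lam)) x) • N x)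
          + (s3 κ lam x • ((-(τ x)) • N x)
              + (deriv κ x * ((1 + lam x ^ 2) * (1 - lam x ^ 2))
              + κ x * (2 * lam x * deriv lam x * (1 - lam x ^ 2)
                + (1 + lam x ^ 2) * (-(2 * lam x * deriv lam x)))) • B x)) x :=
      ((hs1.smul (hTd x)).add (hs2.smul (hNd x))).add (hs3.smul (hBd x))
    apply hJ.congr_deriv
    have hcr : cross (T x) (b0vec κ lam μ T N B x)
        = (-(a3 κ lam x)) • N x + a2 κ lam x • B x := by
      unfold b0vec
      rw [crossE3_add_right, crossE3_add_right, crossE3_smul_right, crossE3_smul_right,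
        crossE3_smul_right, crossE3_self, ← hB x, hTB x]
      module
    rw [hcr]
    have hs2v : s2 κ lam x = (deriv κ x * gfun lam x + κ x * deriv (gfun lam) x) / κ x := by
      unfold s2; rw [(hasDerivAt_s1 hκsm2 hlamsm x).deriv]
    have hdg : deriv (gfun lam) x = 2 * deriv lam x * (1 + lam x ^ 2)
        + 2 * lam x * (2 * lam x * deriv lam x) := (hasDerivAt_gfun hlamsm x).deriv
    have ha3e : a3 κ lam x = -(κ x ^ 2 * (1 + lam x ^ 2) ^ 2 * lam x
        + deriv (F1fun κ lam) x + deriv (deriv (gfun lam)) x) := by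
      unfold a3 F1fun gfun; rfl
    rw [hτeq x, hs2v, hdg, ha3e]
    unfold a2 s1 s3 gfun
    match_scalars <;> (field_simp [hκ0 x]) <;> ring
  -- derivative of b1vec
  have hb1d : ∀ x, HasDerivAt (b1vec κ lam μ γ T N B)
      (-(cross (γ x) (f1 κ lam μ x • N x + f2 κ lam x • B x))) x := by
    intro x
    have h := (hJd x).sub (hasDerivAt_cross (hγd x) (hb0d x))
    apply h.congr_deriv
    abel
  have hb0deriv : ∀ x, deriv (b0vec κ lam μ T N B) x
      = f1 κ lam μ x • N x + f2 κ lam x • B x := fun x => (hb0d x).deriv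
  constructor
  · intro s _
    refine ⟨?_, ?_⟩
    · rw [(hb1d s).deriv, hb0deriv s]
    · rw [(hb1d s).deriv]
  · intro hzero
    refine ⟨b1vec κ lam μ γ T N B 0, ?_⟩
    have hdiff : DifferentiableOn ℝ (b1vec κ lam μ γ T N B) (Icc 0 L) :=
      fun x _ => ((hb1d x).differentiableAt).differentiableWithinAt
    have hderiv : ∀ x ∈ Ico (0 : ℝ) L,
        derivWithin (b1vec κ lam μ γ T N B) (Icc 0 L) x = 0 := by
      intro x hx
      rw [((hb1d x).differentiableAt).derivWithin ((uniqueDiffOn_Icc hL) x (Ico_subset_Icc_self hx))]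
      rw [(hb1d x).deriv]
      obtain ⟨h1, h2⟩ := hzero x (Ico_subset_Icc_self hx)
      rw [h1, h2]
      simp [crossE3_zero_right]
    exact constant_of_derivWithin_zero hdiff hderiv
end
end

section
/- (Proposition) Suppose γ defines an elastic strip with multiplier μ (f₁ ≡ 0 and f₂ ≡ 0), that the force vector b₀ is not identically zero, and that a₁ is constant on [0,L]. Then both κ and λ are constant on [0,L], i.e. γ is a circular (cylindrical) helix. -/
open scoped RealInnerProductSpace
open Set
open scoped ContDiff

noncomputable section

/-- If a smooth function is constant on `[0,L]`, its derivative vanishes on `[0,L]`. -/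
lemma deriv_zero_of_constOn {f : ℝ → ℝ} (hf : ContDiff ℝ ∞ f) {L : ℝ} (hL : 0 < L)
    {c : ℝ} (h : ∀ s ∈ Icc (0:ℝ) L, f s = c) :
    ∀ s ∈ Icc (0:ℝ) L, deriv f s = 0 := by
  have hIoo : ∀ s ∈ Ioo (0:ℝ) L, deriv f s = 0 := by
    intro s hs
    have hev : f =ᶠ[nhds s] fun _ => c :=
      Filter.eventuallyEq_of_mem (isOpen_Ioo.mem_nhds hs)
        (fun x hx => h x (Ioo_subset_Icc_self hx))
    rw [hev.deriv_eq, deriv_const]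
  have hclosed : IsClosed {x : ℝ | deriv f x = 0} :=
    isClosed_eq ((contDiff_infty_iff_deriv.mp hf).2.continuous) continuous_const
  intro s hs
  have hsub : Icc (0:ℝ) L ⊆ {x | deriv f x = 0} := by
    rw [← closure_Ioo hL.ne]
    exact hclosed.closure_subset_iff.mpr (fun x hx => hIoo x hx)
  exact hsub hs

/-- If the derivative vanishes on `[0,L]`, the function is constant there. -/
lemma constOn_of_deriv_zero {f : ℝ → ℝ} (hf : Differentiable ℝ f) {L : ℝ}
    (h : ∀ s ∈ Icc (0:ℝ) L, deriv f s = 0) :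
    ∀ s ∈ Icc (0:ℝ) L, f s = f 0 := by
  intro s hs
  rcases eq_or_lt_of_le hs.1 with h0 | h0
  · rw [← h0]
  · obtain ⟨x, hx, hxd⟩ := exists_hasDerivAt_eq_slope f (deriv f) h0
      hf.continuous.continuousOn (fun y _ => (hf y).hasDerivAt)
    have hx0 : deriv f x = 0 := h x ⟨hx.1.le, hx.2.le.trans hs.2⟩
    rw [hx0] at hxd
    have hs0 : s - 0 ≠ 0 := by simpa using h0.ne'
    have : f s - f 0 = 0 := by
      field_simp at hxd
      linarith
    linarith

/-- **Proposition.** Suppose `γ` defines an elastic strip with multiplier `μ`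
(`f₁ ≡ 0` and `f₂ ≡ 0`), the force vector `b₀` is not identically zero, and `a₁` is
constant on `[0,L]`. Then both `κ` and `λ` are constant on `[0,L]`, i.e. `γ` is a
cylindrical helix. -/
theorem stmt5
    (L : ℝ) (hL : 0 < L)
    (γ T N B : ℝ → E3) (κ τ lam : ℝ → ℝ) (μ : ℝ)
    (hγ : ContDiff ℝ (⊤ : ℕ∞) γ) (hκsm : ContDiff ℝ (⊤ : ℕ∞) κ) (hτsm : ContDiff ℝ (⊤ : ℕ∞) τ)
    (hT : ∀ s, T s = deriv γ s)
    (hunit : ∀ s, ‖deriv γ s‖ = 1)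
    (hκ : ∀ s, κ s = ‖deriv (deriv γ) s‖)
    (hκpos : ∀ s, 0 < κ s)
    (hN : ∀ s, N s = (κ s)⁻¹ • deriv T s)
    (hB : ∀ s, B s = cross (T s) (N s))
    (hfrN : ∀ s, deriv N s = (-(κ s)) • T s + τ s • B s)
    (hfrB : ∀ s, deriv B s = (-(τ s)) • N s)
    (hlam : ∀ s, lam s = τ s / κ s)
    (helastic : ∀ s ∈ Set.Icc (0 : ℝ) L, f1 κ lam μ s = 0 ∧ f2 κ lam s = 0)
    (hb0ne : ∃ s ∈ Set.Icc (0 : ℝ) L, b0vec κ lam μ T N B s ≠ 0)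
    (ha1const : ∃ c : ℝ, ∀ s ∈ Set.Icc (0 : ℝ) L, a1 κ lam μ s = c) :
    ∃ k l : ℝ, ∀ s ∈ Set.Icc (0 : ℝ) L, κ s = k ∧ lam s = l := by
  have h0mem : (0:ℝ) ∈ Icc (0:ℝ) L := ⟨le_refl _, hL.le⟩
  have hlamfun : lam = fun s => τ s / κ s := funext hlam
  have hlamsm : ContDiff ℝ ∞ lam := by
    rw [hlamfun]; exact (hτsm.of_le (by simp)).div (hκsm.of_le (by simp)) (fun s => (hκpos s).ne')
  have hdκ : ContDiff ℝ ∞ (deriv κ) := (contDiff_infty_iff_deriv.mp (hκsm.of_le (by simp))).2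
  have hdlam : ContDiff ℝ ∞ (deriv lam) := (contDiff_infty_iff_deriv.mp hlamsm).2
  set g : ℝ → ℝ := fun s => κ s * (1 + lam s ^ 2) with hgdef
  have hgsm : ContDiff ℝ ∞ g := (hκsm.of_le (by simp)).mul (contDiff_const.add (hlamsm.pow 2))
  have hgpos : ∀ s, 0 < g s := fun s => mul_pos (hκpos s) (by positivity)
  obtain ⟨c, hc⟩ := ha1const
  -- g is constant on [0,L]
  have hgconst : ∀ s ∈ Icc (0:ℝ) L, g s = g 0 := by
    intro s hs
    have h1 := hc s hs
    have h2 := hc 0 h0mem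
    simp only [a1] at h1 h2
    have hsq : g s ^ 2 = g 0 ^ 2 := by
      simp only [hgdef, mul_pow]
      nlinarith [h1, h2]
    have hfac : (g s - g 0) * (g s + g 0) = 0 := by nlinarith [hsq]
    rcases mul_eq_zero.mp hfac with h | h
    · linarith
    · nlinarith [hgpos s, hgpos 0]
  -- deriv of g
  have hgderiv : ∀ s, deriv g s
      = deriv κ s * (1 + lam s ^ 2) + κ s * (2 * lam s * deriv lam s) := by
    intro s
    have hκd : HasDerivAt κ (deriv κ s) s := ((hκsm.of_le (by simp)).differentiable (by simp : (∞ : WithTop ℕ∞) ≠ 0) s).hasDerivAt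
    have hld : HasDerivAt lam (deriv lam s) s := (hlamsm.differentiable (by simp : (∞ : WithTop ℕ∞) ≠ 0) s).hasDerivAt
    have h1 : HasDerivAt (fun u => 1 + lam u ^ 2) (2 * lam s * deriv lam s) s := by
      have := (hld.pow 2).const_add (1:ℝ)
      simpa [mul_comm, mul_assoc] using this
    have := (hκd.mul h1).deriv
    simpa [hgdef, Pi.mul_def] using this
  have hgd0 : ∀ s ∈ Icc (0:ℝ) L, deriv g s = 0 := deriv_zero_of_constOn hgsm hL hgconst
  -- a₂ vanishes on [0,L]
  have ha2 : ∀ s ∈ Icc (0:ℝ) L, a2 κ lam s = 0 := by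
    intro s hs
    have h := hgd0 s hs
    rw [hgderiv s] at h
    simp only [a2]
    linear_combination (1 + lam s ^ 2) * h
  -- a₂ is smooth
  have ha2sm : ContDiff ℝ ∞ (a2 κ lam) := by
    unfold a2
    exact (hdκ.mul ((contDiff_const.add (hlamsm.pow 2)).pow 2)).add
      ((((contDiff_const.mul (hκsm.of_le (by simp))).mul (contDiff_const.add (hlamsm.pow 2))).mul hlamsm).mul hdlam)
  have hda2 : ∀ s ∈ Icc (0:ℝ) L, deriv (a2 κ lam) s = 0 :=
    deriv_zero_of_constOn ha2sm hL ha2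
  -- key: a₁ = λ a₃
  have hkey : ∀ s ∈ Icc (0:ℝ) L, a1 κ lam μ s = lam s * a3 κ lam s := by
    intro s hs
    have hf1 := (helastic s hs).1
    simp only [f1] at hf1
    rw [hda2 s hs] at hf1
    have h2 : κ s * (a1 κ lam μ s - lam s * a3 κ lam s) = 0 := by linear_combination hf1
    rcases mul_eq_zero.mp h2 with h | h
    · exact absurd h (hκpos s).ne'
    · linarith
  -- a₃ is smooth
  have hGsm : ContDiff ℝ ∞ (fun u => 2 * lam u * (1 + lam u ^ 2)) :=
    (contDiff_const.mul hlamsm).mul (contDiff_const.add (hlamsm.pow 2))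
  have hFsm : ContDiff ℝ ∞ (fun u => deriv κ u / κ u * (2 * lam u * (1 + lam u ^ 2))) :=
    (hdκ.div (hκsm.of_le (by simp)) fun s => (hκpos s).ne').mul hGsm
  have hdF := (contDiff_infty_iff_deriv.mp hFsm).2
  have hddG := (contDiff_infty_iff_deriv.mp (contDiff_infty_iff_deriv.mp hGsm).2).2
  have ha3sm : ContDiff ℝ ∞ (a3 κ lam) := by
    unfold a3
    exact ((((((hκsm.of_le (by simp)).pow 2).mul ((contDiff_const.add (hlamsm.pow 2)).pow 2)).mul hlamsm).add
      hdF).add hddG).neg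
  -- a₃ is constant on [0,L]
  have hda3 : ∀ s ∈ Icc (0:ℝ) L, deriv (a3 κ lam) s = 0 := by
    intro s hs
    have hf2 := (helastic s hs).2
    simp only [f2] at hf2
    rw [ha2 s hs, mul_zero, add_zero] at hf2
    exact hf2
  have ha3c : ∀ s ∈ Icc (0:ℝ) L, a3 κ lam s = a3 κ lam 0 :=
    constOn_of_deriv_zero (ha3sm.differentiable (by simp : (∞ : WithTop ℕ∞) ≠ 0)) hda3
  by_cases hd : a3 κ lam 0 = 0
  · exfalso
    obtain ⟨s, hs, hne⟩ := hb0ne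
    apply hne
    have h3 : a3 κ lam s = 0 := (ha3c s hs).trans hd
    have h1 : a1 κ lam μ s = 0 := by rw [hkey s hs, h3, mul_zero]
    have h2 : a2 κ lam s = 0 := ha2 s hs
    simp [b0vec, h1, h2, h3]
  · refine ⟨κ 0, lam 0, fun s hs => ?_⟩
    have hl : lam s = lam 0 := by
      have h1 := hkey s hs
      have h2 := hkey 0 h0mem
      have e1 := hc s hs
      have e2 := hc 0 h0mem
      have hmul : lam s * a3 κ lam s = lam 0 * a3 κ lam 0 := by
        rw [← h1, ← h2, e1, e2]
      rw [ha3c s hs] at hmul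
      exact mul_right_cancel₀ hd hmul
    have hg := hgconst s hs
    simp only [hgdef] at hg
    rw [hl] at hg
    have hpos : (0:ℝ) < 1 + lam 0 ^ 2 := by positivity
    exact ⟨mul_right_cancel₀ hpos.ne' hg, hl⟩
end
end

section
/- (Normalized momentum identities) Suppose κ·λ·(1+λ²) ≡ 1 on [0,L] (normalized momentum strip, s₁ ≡ 2) with λ > 0. Then a₂ = −λ'(1+λ²)/λ² and a₃ = −1/λ identically; consequently ⟨b₀, b₀⟩ = ¼(1/λ² + μ)² + (λ'²/λ⁴)(1+λ²)² + 1/λ², and s₁a₁ + s₂a₂ + s₃a₃ = μ + 1 identically (so ⟨b₀, b₁ + γ × b₀⟩ = μ + 1 along γ). -/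
open scoped RealInnerProductSpace
open Set

noncomputable section

open scoped ContDiff

private lemma deriv_eqOn_zero' {f : ℝ → ℝ} {c L : ℝ} (hL : 0 < L) (hf : ContDiff ℝ ∞ f)
    (h : EqOn f (fun _ => c) (Icc 0 L)) : EqOn (deriv f) (fun _ => 0) (Icc 0 L) := by
  have h1 : EqOn (deriv f) (fun _ => 0) (Ioo 0 L) := by
    intro s hs
    have he : f =ᶠ[nhds s] (fun _ => c) :=
      Filter.eventuallyEq_of_mem (isOpen_Ioo.mem_nhds hs) (h.mono Ioo_subset_Icc_self)
    simp [he.deriv_eq]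
  have h2 := h1.closure (hf.continuous_deriv (by simp)) continuous_const
  rwa [closure_Ioo hL.ne] at h2

/-- **Normalized momentum identities.** Suppose `κλ(1+λ²) ≡ 1` on `[0,L]`
with `λ > 0`. Then `a₂ = −λ'(1+λ²)/λ²` and `a₃ = −1/λ`; consequently
`⟨b₀,b₀⟩ = ¼(1/λ² + μ)² + (λ'²/λ⁴)(1+λ²)² + 1/λ²`, and
`s₁a₁ + s₂a₂ + s₃a₃ = μ + 1` (so `⟨b₀, b₁ + γ × b₀⟩ = μ + 1` along `γ`). -/
theorem stmt7
    (L : ℝ) (hL : 0 < L)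
    (γ T N B : ℝ → E3) (κ τ lam : ℝ → ℝ) (μ : ℝ)
    (hγ : ContDiff ℝ (⊤ : ℕ∞) γ) (hκsm : ContDiff ℝ (⊤ : ℕ∞) κ) (hτsm : ContDiff ℝ (⊤ : ℕ∞) τ)
    (hT : ∀ s, T s = deriv γ s)
    (hunit : ∀ s, ‖deriv γ s‖ = 1)
    (hκ : ∀ s, κ s = ‖deriv (deriv γ) s‖)
    (hκpos : ∀ s, 0 < κ s)
    (hN : ∀ s, N s = (κ s)⁻¹ • deriv T s)
    (hB : ∀ s, B s = cross (T s) (N s))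
    (hfrN : ∀ s, deriv N s = (-(κ s)) • T s + τ s • B s)
    (hfrB : ∀ s, deriv B s = (-(τ s)) • N s)
    (hlam : ∀ s, lam s = τ s / κ s)
    (hlampos : ∀ s ∈ Set.Icc (0 : ℝ) L, 0 < lam s)
    (hnorm : ∀ s ∈ Set.Icc (0 : ℝ) L, κ s * lam s * (1 + lam s ^ 2) = 1) :
    ∀ s ∈ Set.Icc (0 : ℝ) L,
      a2 κ lam s = -(deriv lam s * (1 + lam s ^ 2) / lam s ^ 2) ∧
      a3 κ lam s = -(1 / lam s) ∧
      ⟪b0vec κ lam μ T N B s, b0vec κ lam μ T N B s⟫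
        = (1 / lam s ^ 2 + μ) ^ 2 / 4
          + (deriv lam s ^ 2 / lam s ^ 4) * (1 + lam s ^ 2) ^ 2 + 1 / lam s ^ 2 ∧
      s1 κ lam s * a1 κ lam μ s + s2 κ lam s * a2 κ lam s + s3 κ lam s * a3 κ lam s
        = μ + 1 ∧
      ⟪b0vec κ lam μ T N B s,
        b1vec κ lam μ γ T N B s + cross (γ s) (b0vec κ lam μ T N B s)⟫ = μ + 1 := by
  -- ## Smoothness preliminaries
  have hκne : ∀ u, κ u ≠ 0 := fun u => (hκpos u).ne'
  have hκ' : ContDiff ℝ ∞ κ := hκsm.of_le (by simp)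
  have hτ' : ContDiff ℝ ∞ τ := hτsm.of_le (by simp)
  have hlamf : lam = fun u => τ u / κ u := funext hlam
  have hlamsm : ContDiff ℝ ∞ lam := by rw [hlamf]; exact hτ'.div hκ' hκne
  have hdl : ∀ u, HasDerivAt lam (deriv lam u) u :=
    fun u => ((hlamsm.differentiable (by simp)) u).hasDerivAt
  have hdκ : ∀ u, HasDerivAt κ (deriv κ u) u :=
    fun u => ((hκ'.differentiable (by simp)) u).hasDerivAt
  -- ## derivative of λ(1+λ²)
  set dA : ℝ → ℝ :=
    fun u => deriv lam u * (1 + lam u ^ 2) + lam u * (2 * lam u * deriv lam u) with hdA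
  have hA : ∀ u, HasDerivAt (fun v => lam v * (1 + lam v ^ 2)) (dA u) u := by
    intro u
    have hsq : HasDerivAt (fun v => 1 + lam v ^ 2) (2 * lam u * deriv lam u) u := by
      have h2 := (hdl u).fun_pow 2
      have h3 := (hasDerivAt_const u (1 : ℝ)).fun_add h2
      simpa using h3
    exact (hdl u).mul hsq
  -- ## the normalized quantity g = κ·(λ(1+λ²))
  set g : ℝ → ℝ := fun u => κ u * (lam u * (1 + lam u ^ 2)) with hgdef
  have hgsm : ContDiff ℝ ∞ g :=
    hκ'.mul (hlamsm.mul (contDiff_const.add (hlamsm.pow 2)))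
  have hgd : ∀ u, HasDerivAt g (deriv κ u * (lam u * (1 + lam u ^ 2)) + κ u * dA u) u :=
    fun u => (hdκ u).mul (hA u)
  have hgEq : EqOn g (fun _ => 1) (Icc 0 L) := by
    intro u hu
    have := hnorm u hu
    simp only [hgdef]
    linear_combination this
  have hE2 : ∀ u ∈ Icc (0:ℝ) L,
      deriv κ u * (lam u * (1 + lam u ^ 2)) + κ u * dA u = 0 := by
    intro u hu
    have h0 := deriv_eqOn_zero' hL hgsm hgEq hu
    rw [(hgd u).deriv] at h0
    exact h0
  -- ## the function P = 2λ(1+λ²)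
  have hPf : (fun u => 2 * lam u * (1 + lam u ^ 2))
      = fun u => 2 * (lam u * (1 + lam u ^ 2)) := by funext u; ring
  have hPsm : ContDiff ℝ ∞ (fun u => 2 * lam u * (1 + lam u ^ 2)) := by
    rw [hPf]; exact contDiff_const.mul (hlamsm.mul (contDiff_const.add (hlamsm.pow 2)))
  have hPd : ∀ u, HasDerivAt (fun v => 2 * lam v * (1 + lam v ^ 2)) (2 * dA u) u := by
    intro u; rw [hPf]; exact HasDerivAt.const_mul (2:ℝ) (hA u)
  have hPderiv : ∀ u, deriv (fun v => 2 * lam v * (1 + lam v ^ 2)) u = 2 * dA u :=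
    fun u => (hPd u).deriv
  -- ## Q = (κ'/κ)·P  and  Q + P' = 0 on the strip
  set Q : ℝ → ℝ := fun u => deriv κ u / κ u * (2 * lam u * (1 + lam u ^ 2)) with hQdef
  have hQsm : ContDiff ℝ ∞ Q :=
    ((contDiff_infty_iff_deriv.mp hκ').2.div hκ' hκne).mul hPsm
  have hP'sm : ContDiff ℝ ∞ (deriv (fun v => 2 * lam v * (1 + lam v ^ 2))) :=
    (contDiff_infty_iff_deriv.mp hPsm).2
  have hQP : EqOn (fun u => Q u + deriv (fun v => 2 * lam v * (1 + lam v ^ 2)) u)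
      (fun _ => 0) (Icc 0 L) := by
    intro u hu
    have e2 := hE2 u hu
    have hk := hκne u
    simp only [hQdef, hPderiv]
    field_simp
    linear_combination 2 * e2
  have hQPd : ∀ u ∈ Icc (0:ℝ) L,
      deriv Q u + deriv (deriv (fun v => 2 * lam v * (1 + lam v ^ 2))) u = 0 := by
    intro u hu
    have h0 := deriv_eqOn_zero' hL (hQsm.add hP'sm) hQP hu
    rw [deriv_fun_add ((hQsm.differentiable (by simp)) u)
      ((hP'sm.differentiable (by simp)) u)] at h0
    exact h0
  -- ## s₂ = 0 on the strip
  have hs1f : s1 κ lam = fun u => 2 * g u := by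
    funext u; simp only [s1, hgdef]; ring
  have hs1sm : ContDiff ℝ ∞ (s1 κ lam) := by rw [hs1f]; exact contDiff_const.mul hgsm
  have hs1Eq : EqOn (s1 κ lam) (fun _ => 2) (Icc 0 L) := by
    intro u hu
    have := hnorm u hu
    simp only [s1]
    linear_combination 2 * this
  have hs2 : ∀ u ∈ Icc (0:ℝ) L, s2 κ lam u = 0 := by
    intro u hu
    have h0 := deriv_eqOn_zero' hL hs1sm hs1Eq hu
    simp only [s2]
    simp only [Pi.zero_apply] at h0 ⊢
    rw [h0]
    simp
  -- ## the pointwise values of a₂ and a₃ on the strip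
  have hlamne : ∀ u ∈ Icc (0:ℝ) L, lam u ≠ 0 := fun u hu => (hlampos u hu).ne'
  have ha2 : ∀ u ∈ Icc (0:ℝ) L,
      a2 κ lam u = -(deriv lam u * (1 + lam u ^ 2) / lam u ^ 2) := by
    intro u hu
    have e1 := hnorm u hu
    have e2 := hE2 u hu
    have hlu := hlamne u hu
    simp only [a2, hdA] at e2 ⊢
    rw [← neg_div, eq_div_iff (pow_ne_zero 2 hlu)]
    linear_combination (lam u * (1 + lam u ^ 2)) * e2 - (deriv lam u * (1 + lam u ^ 2)) * e1
  have ha3 : ∀ u ∈ Icc (0:ℝ) L, a3 κ lam u = -(1 / lam u) := by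
    intro u hu
    have e1 := hnorm u hu
    have hz := hQPd u hu
    have hlu := hlamne u hu
    simp only [a3, ← hQdef]
    rw [show -(1 / lam u) = (-1) / lam u by ring, eq_div_iff hlu]
    linear_combination (-(κ u * lam u * (1 + lam u ^ 2) + 1)) * e1 - lam u * hz
  -- ## orthonormal frame facts
  have hγd : Differentiable ℝ (deriv γ) :=
    ((contDiff_infty_iff_deriv.mp (hγ.of_le (by simp))).2).differentiable (by simp)
  have hip0 : ∀ u, ⟪deriv γ u, deriv (deriv γ) u⟫ = 0 := by
    intro u
    have hF : (fun v => ⟪deriv γ v, deriv γ v⟫) = fun _ => (1:ℝ) := by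
      funext v; rw [real_inner_self_eq_norm_sq, hunit]; norm_num
    have h1 : HasDerivAt (deriv γ) (deriv (deriv γ) u) u := (hγd u).hasDerivAt
    have h2 := h1.inner ℝ h1
    rw [hF] at h2
    have h3 := h2.unique (hasDerivAt_const u (1:ℝ))
    have h4 : ⟪deriv (deriv γ) u, deriv γ u⟫ = ⟪deriv γ u, deriv (deriv γ) u⟫ :=
      real_inner_comm _ _
    linarith [h3, h4.symm, h4]
  have hTf : T = deriv γ := funext hT
  have hderivT : ∀ u, deriv T u = deriv (deriv γ) u := fun u => by rw [hTf]
  have o1 : ∀ u, ⟪T u, T u⟫ = 1 := by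
    intro u; rw [hT u, real_inner_self_eq_norm_sq, hunit]; norm_num
  have o2 : ∀ u, ⟪T u, N u⟫ = 0 := by
    intro u
    rw [hN u, hderivT u, hT u, real_inner_smul_right, hip0, mul_zero]
  have o3 : ∀ u, ⟪N u, N u⟫ = 1 := by
    intro u
    rw [hN u, hderivT u, real_inner_smul_left, real_inner_smul_right,
      real_inner_self_eq_norm_sq, ← hκ u]
    field_simp
    exact div_self (hκne u)
  have ipc : ∀ x y : E3, ⟪x, y⟫ = x 0 * y 0 + x 1 * y 1 + x 2 * y 2 := by
    intro x y
    simp [PiLp.inner_apply, Fin.sum_univ_three, RCLike.inner_apply, conj_trivial]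
    ring
  have hB0 : ∀ u, B u 0 = T u 1 * N u 2 - T u 2 * N u 1 := by
    intro u; rw [hB u]; simp [cross, cross_apply]
  have hB1 : ∀ u, B u 1 = T u 2 * N u 0 - T u 0 * N u 2 := by
    intro u; rw [hB u]; simp [cross, cross_apply]
  have hB2 : ∀ u, B u 2 = T u 0 * N u 1 - T u 1 * N u 0 := by
    intro u; rw [hB u]; simp [cross, cross_apply]
  have o4 : ∀ u, ⟪T u, B u⟫ = 0 := by
    intro u; rw [ipc, hB0, hB1, hB2]; ring
  have o5 : ∀ u, ⟪N u, B u⟫ = 0 := by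
    intro u; rw [ipc, hB0, hB1, hB2]; ring
  have o6 : ∀ u, ⟪B u, B u⟫ = 1 := by
    intro u
    have p1 := o1 u; have p2 := o2 u; have p3 := o3 u
    rw [ipc] at p1 p2 p3 ⊢
    rw [hB0, hB1, hB2]
    linear_combination (N u 0 ^ 2 + N u 1 ^ 2 + N u 2 ^ 2) * p1 + p3
      - (T u 0 * N u 0 + T u 1 * N u 1 + T u 2 * N u 2) * p2
  have expand : ∀ (u x1 x2 x3 y1 y2 y3 : ℝ),
      ⟪x1 • T u + x2 • N u + x3 • B u, y1 • T u + y2 • N u + y3 • B u⟫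
        = x1 * y1 + x2 * y2 + x3 * y3 := by
    intro u x1 x2 x3 y1 y2 y3
    have c2 : ⟪N u, T u⟫ = 0 := by rw [real_inner_comm]; exact o2 u
    have c4 : ⟪B u, T u⟫ = 0 := by rw [real_inner_comm]; exact o4 u
    have c5 : ⟪B u, N u⟫ = 0 := by rw [real_inner_comm]; exact o5 u
    simp only [inner_add_left, inner_add_right, real_inner_smul_left, real_inner_smul_right,
      o1 u, o2 u, o3 u, o4 u, o5 u, o6 u, c2, c4, c5]
    ring
  -- ## conclusion
  intro s hs
  have e1 := hnorm s hs
  have hls := hlampos s hs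
  have hlne : lam s ≠ 0 := hls.ne'
  have A2 := ha2 s hs
  have A3 := ha3 s hs
  have hk2 : κ s ^ 2 * (1 + lam s ^ 2) ^ 2 = 1 / lam s ^ 2 := by
    rw [eq_div_iff (pow_ne_zero 2 hlne)]
    linear_combination (κ s * lam s * (1 + lam s ^ 2) + 1) * e1
  have key : s1 κ lam s * a1 κ lam μ s + s2 κ lam s * a2 κ lam s
      + s3 κ lam s * a3 κ lam s = μ + 1 := by
    have hs1v : s1 κ lam s = 2 := by simp only [s1]; linear_combination 2 * e1
    have hs3v : s3 κ lam s = 1 / lam s - lam s := by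
      simp only [s3]
      rw [show (1:ℝ) / lam s - lam s = (1 - lam s ^ 2) / lam s by field_simp, eq_div_iff hlne]
      linear_combination (1 - lam s ^ 2) * e1
    rw [hs1v, hs2 s hs, hs3v, A3]
    simp only [a1]
    rw [hk2]
    field_simp
    ring
  refine ⟨A2, A3, ?_, key, ?_⟩
  · have hbb : ⟪b0vec κ lam μ T N B s, b0vec κ lam μ T N B s⟫
        = a1 κ lam μ s ^ 2 + a2 κ lam s ^ 2 + a3 κ lam s ^ 2 := by
      simp only [b0vec]
      rw [expand]
      ring
    rw [hbb, A2, A3]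
    simp only [a1]
    rw [hk2]
    field_simp
    ring
  · have hJ : b1vec κ lam μ γ T N B s + cross (γ s) (b0vec κ lam μ T N B s)
        = Jvec κ lam T N B s := by
      simp [b1vec]
    rw [hJ]
    have hbJ : ⟪b0vec κ lam μ T N B s, Jvec κ lam T N B s⟫
        = s1 κ lam s * a1 κ lam μ s + s2 κ lam s * a2 κ lam s + s3 κ lam s * a3 κ lam s := by
      simp only [b0vec, Jvec]
      rw [expand]
      ring
    rw [hbJ, key]
end
end

section
/- (Lemma on force-free strips) Take μ = −1 and suppose λ is non-constant on [0,L]. If a₁ ≡ 0 (equivalently κ = 1/(1+λ²)) and ⟨J, J⟩ is constant on [0,L], then a₂ ≡ 0 and a₃ ≡ 0, so the force vector b₀ vanishes identically and γ defines an elastic strip (a force-free strip). Moreover, under a₁ ≡ 0 one has the identity ⟨J, J⟩ = (4λ'² + 1)(1 + λ²)². -/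
open scoped RealInnerProductSpace ContDiff
open Set

noncomputable section

lemma inner_eq_dot_s10 (x y : E3) :
    ⟪x, y⟫ = dotProduct (WithLp.equiv 2 (Fin 3 → ℝ) x) (WithLp.equiv 2 (Fin 3 → ℝ) y) := by
  simp [PiLp.inner_apply, dotProduct, RCLike.inner_apply, mul_comm]

lemma inner_cross_left (x y : E3) : ⟪x, cross x y⟫ = 0 := by
  rw [inner_eq_dot_s10]; simp only [cross, Equiv.apply_symm_apply]; exact dot_self_cross _ _

lemma inner_cross_right (x y : E3) : ⟪y, cross x y⟫ = 0 := by
  rw [inner_eq_dot_s10]; simp only [cross, Equiv.apply_symm_apply]; exact dot_cross_self _ _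

lemma inner_cross_cross (x y : E3) :
    ⟪cross x y, cross x y⟫ = ⟪x,x⟫ * ⟪y,y⟫ - ⟪x,y⟫ * ⟪x,y⟫ := by
  simp only [inner_eq_dot_s10, cross, Equiv.apply_symm_apply]
  rw [cross_dot_cross]
  congr 1
  rw [dotProduct_comm ((WithLp.equiv 2 (Fin 3 → ℝ)) y) ((WithLp.equiv 2 (Fin 3 → ℝ)) x)]

lemma inner_triple (t n b : E3) (p q r : ℝ)
    (htt : ⟪t,t⟫ = 1) (hnn : ⟪n,n⟫ = 1) (hbb : ⟪b,b⟫ = 1)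
    (htn : ⟪t,n⟫ = 0) (htb : ⟪t,b⟫ = 0) (hnb : ⟪n,b⟫ = 0) :
    ⟪p•t+q•n+r•b, p•t+q•n+r•b⟫ = p^2+q^2+r^2 := by
  have hnt : ⟪n,t⟫ = (0:ℝ) := by rw [real_inner_comm]; exact htn
  have hbt : ⟪b,t⟫ = (0:ℝ) := by rw [real_inner_comm]; exact htb
  have hbn : ⟪b,n⟫ = (0:ℝ) := by rw [real_inner_comm]; exact hnb
  simp only [inner_add_left, inner_add_right, real_inner_smul_left, real_inner_smul_right,
    htt, hnn, hbb, htn, htb, hnb, hnt, hbt, hbn]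
  ring

lemma deriv_eqOn_of_eqOn {f h : ℝ → ℝ} {A : Set ℝ} {x : ℝ}
    (hf : DifferentiableAt ℝ f x) (hh : DifferentiableAt ℝ h x)
    (heq : Set.EqOn f h A) (hx : x ∈ A) (hu : UniqueDiffWithinAt ℝ A x) :
    deriv f x = deriv h x := by
  have h1 : HasDerivWithinAt h (deriv f x) A x :=
    (hf.hasDerivAt.hasDerivWithinAt).congr (fun y hy => (heq hy).symm) (heq hx).symm
  have h2 : HasDerivWithinAt h (deriv h x) A x := hh.hasDerivAt.hasDerivWithinAt
  exact (h1.derivWithin hu).symm.trans (h2.derivWithin hu)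

lemma deriv_eqOn_const {f : ℝ → ℝ} {A : Set ℝ} {x : ℝ} {c : ℝ}
    (hf : DifferentiableAt ℝ f x) (heq : ∀ y ∈ A, f y = c) (hx : x ∈ A)
    (hu : UniqueDiffWithinAt ℝ A x) : deriv f x = 0 := by
  have := deriv_eqOn_of_eqOn hf (differentiableAt_const c) (fun y hy => heq y hy) hx hu
  simpa using this

/-- **Lemma on force-free strips.** Take `μ = −1` and suppose `λ` is
non-constant on `[0,L]`. Under `a₁ ≡ 0` one has `⟨J,J⟩ = (4λ'² + 1)(1+λ²)²`; and if
moreover `⟨J,J⟩` is constant on `[0,L]`, then `a₂ ≡ 0` and `a₃ ≡ 0`, so `b₀ ≡ 0` and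
`γ` defines an elastic (force-free) strip. -/
theorem stmt10
    (L : ℝ) (hL : 0 < L)
    (γ T N B : ℝ → E3) (κ τ lam : ℝ → ℝ)
    (hγ : ContDiff ℝ (⊤ : ℕ∞) γ) (hκsm : ContDiff ℝ (⊤ : ℕ∞) κ) (hτsm : ContDiff ℝ (⊤ : ℕ∞) τ)
    (hT : ∀ s, T s = deriv γ s)
    (hunit : ∀ s, ‖deriv γ s‖ = 1)
    (hκ : ∀ s, κ s = ‖deriv (deriv γ) s‖)
    (hκpos : ∀ s, 0 < κ s)
    (hN : ∀ s, N s = (κ s)⁻¹ • deriv T s)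
    (hB : ∀ s, B s = cross (T s) (N s))
    (hfrN : ∀ s, deriv N s = (-(κ s)) • T s + τ s • B s)
    (hfrB : ∀ s, deriv B s = (-(τ s)) • N s)
    (hlam : ∀ s, lam s = τ s / κ s)
    (hlamnonconst : ∃ s₁ ∈ Set.Icc (0 : ℝ) L, ∃ s₂ ∈ Set.Icc (0 : ℝ) L, lam s₁ ≠ lam s₂)
    (ha1 : ∀ s ∈ Set.Icc (0 : ℝ) L, a1 κ lam (-1) s = 0) :
    (∀ s ∈ Set.Icc (0 : ℝ) L,
      ⟪Jvec κ lam T N B s, Jvec κ lam T N B s⟫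
        = (4 * deriv lam s ^ 2 + 1) * (1 + lam s ^ 2) ^ 2) ∧
    ((∃ C : ℝ, ∀ s ∈ Set.Icc (0 : ℝ) L, ⟪Jvec κ lam T N B s, Jvec κ lam T N B s⟫ = C) →
      ∀ s ∈ Set.Icc (0 : ℝ) L,
        a2 κ lam s = 0 ∧ a3 κ lam s = 0 ∧
        b0vec κ lam (-1) T N B s = 0 ∧
        f1 κ lam (-1) s = 0 ∧ f2 κ lam s = 0) := by
  -- basic smoothness facts
  have hκ0 : ∀ s, κ s ≠ 0 := fun s => (hκpos s).ne'
  have hκd : Differentiable ℝ κ := hκsm.differentiable (by simp)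
  have hdκ_cd : ContDiff ℝ (⊤ : ℕ∞) (deriv κ) := (contDiff_succ_iff_deriv.mp hκsm).2.2
  have hdκd : Differentiable ℝ (deriv κ) := hdκ_cd.differentiable (by simp)
  have hlam_cd : ContDiff ℝ (⊤ : ℕ∞) lam := by
    have h : lam = fun s => τ s / κ s := funext hlam
    rw [h]; exact hτsm.div hκsm hκ0
  have hld : Differentiable ℝ lam := hlam_cd.differentiable (by simp)
  have hdl_cd : ContDiff ℝ (⊤ : ℕ∞) (deriv lam) := (contDiff_succ_iff_deriv.mp hlam_cd).2.2
  have hdld : Differentiable ℝ (deriv lam) := hdl_cd.differentiable (by simp)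
  have hddl_cd : ContDiff ℝ (⊤ : ℕ∞) (deriv (deriv lam)) := (contDiff_succ_iff_deriv.mp hdl_cd).2.2
  have hddld : Differentiable ℝ (deriv (deriv lam)) := hddl_cd.differentiable (by simp)
  have hone : ∀ s : ℝ, (0:ℝ) < 1 + lam s ^ 2 := fun s => by positivity
  have hUD : UniqueDiffOn ℝ (Icc (0:ℝ) L) := uniqueDiffOn_Icc hL
  have hsq : ∀ s, HasDerivAt (fun u => 1 + lam u ^ 2) (2 * lam s * deriv lam s) s := by
    intro s
    have h := ((hld s).hasDerivAt.fun_pow 2).const_add 1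
    convert h using 1 <;> first | rfl | (push_cast; ring)
  -- the function g = κ(1+λ²)
  have hg' : ∀ s, HasDerivAt (fun u => κ u * (1 + lam u ^ 2))
      (deriv κ s * (1 + lam s ^ 2) + κ s * (2 * lam s * deriv lam s)) s :=
    fun s => (hκd s).hasDerivAt.mul (hsq s)
  have hgd : Differentiable ℝ (fun u => κ u * (1 + lam u ^ 2)) :=
    fun s => (hg' s).differentiableAt
  have hg1 : ∀ s ∈ Icc (0:ℝ) L, κ s * (1 + lam s ^ 2) = 1 := by
    intro s hs
    have h := ha1 s hs
    simp only [a1] at h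
    have h2 : κ s ^ 2 * (1 + lam s ^ 2) ^ 2 = 1 := by linarith
    have h3 : (κ s * (1 + lam s ^ 2) - 1) * (κ s * (1 + lam s ^ 2) + 1) = 0 := by
      linear_combination h2
    rcases mul_eq_zero.mp h3 with h4 | h4
    · linarith
    · nlinarith [mul_pos (hκpos s) (hone s)]
  have hdg0 : ∀ s ∈ Icc (0:ℝ) L,
      deriv (fun u => κ u * (1 + lam u ^ 2)) s = 0 := fun s hs =>
    deriv_eqOn_const (hgd s) hg1 hs (hUD s hs)
  have hD0 : ∀ s ∈ Icc (0:ℝ) L,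
      deriv κ s * (1 + lam s ^ 2) + κ s * (2 * lam s * deriv lam s) = 0 := by
    intro s hs
    rw [← (hg' s).deriv]
    exact hdg0 s hs
  -- a2
  have ha2_0 : ∀ s ∈ Icc (0:ℝ) L, a2 κ lam s = 0 := by
    intro s hs
    have hD := hD0 s hs
    simp only [a2]
    linear_combination (1 + lam s ^ 2) * hD
  have ha2d : Differentiable ℝ (a2 κ lam) := by
    have h : a2 κ lam = fun s => deriv κ s * (1 + lam s ^ 2) ^ 2
        + 2 * κ s * (1 + lam s ^ 2) * lam s * deriv lam s := rfl
    rw [h]; fun_prop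
  -- orthonormal frame
  have hTfun : T = deriv γ := funext hT
  have hdγ_cd : ContDiff ℝ (⊤ : ℕ∞) (deriv γ) := (contDiff_succ_iff_deriv.mp hγ).2.2
  have hdγd : Differentiable ℝ (deriv γ) := hdγ_cd.differentiable (by simp)
  have hTT : ∀ s, ⟪T s, T s⟫ = (1:ℝ) := by
    intro s; rw [hT s, real_inner_self_eq_norm_sq, hunit s]; norm_num
  have hinner0 : ∀ s, ⟪deriv γ s, deriv (deriv γ) s⟫ = (0:ℝ) := by
    intro s
    have hd : HasDerivAt (fun u => ⟪deriv γ u, deriv γ u⟫)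
        (⟪deriv γ s, deriv (deriv γ) s⟫ + ⟪deriv (deriv γ) s, deriv γ s⟫) s :=
      (hdγd s).hasDerivAt.inner ℝ (hdγd s).hasDerivAt
    have hconst : (fun u => ⟪deriv γ u, deriv γ u⟫) = fun _ : ℝ => (1:ℝ) := by
      funext u; rw [real_inner_self_eq_norm_sq, hunit u]; norm_num
    rw [hconst] at hd
    have h0 := (hasDerivAt_const s (1:ℝ)).unique hd
    have hsymm : ⟪deriv (deriv γ) s, deriv γ s⟫ = ⟪deriv γ s, deriv (deriv γ) s⟫ :=
      real_inner_comm _ _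
    linarith
  have hdT : ∀ s, deriv T s = deriv (deriv γ) s := by rw [hTfun]; exact fun _ => rfl
  have hTN : ∀ s, ⟪T s, N s⟫ = (0:ℝ) := by
    intro s
    rw [hT s, hN s, hdT s, real_inner_smul_right, hinner0 s, mul_zero]
  have hNN : ∀ s, ⟪N s, N s⟫ = (1:ℝ) := by
    intro s
    have hknz := hκ0 s
    rw [hN s, hdT s, real_inner_smul_left, real_inner_smul_right,
      real_inner_self_eq_norm_sq, ← hκ s]
    field_simp
  have hTB : ∀ s, ⟪T s, B s⟫ = (0:ℝ) := fun s => by rw [hB s]; exact inner_cross_left _ _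
  have hNB : ∀ s, ⟪N s, B s⟫ = (0:ℝ) := fun s => by rw [hB s]; exact inner_cross_right _ _
  have hBB : ∀ s, ⟪B s, B s⟫ = (1:ℝ) := by
    intro s; rw [hB s, inner_cross_cross, hTT s, hNN s, hTN s]; ring
  have hJJ : ∀ s, ⟪Jvec κ lam T N B s, Jvec κ lam T N B s⟫
      = s1 κ lam s ^ 2 + s2 κ lam s ^ 2 + s3 κ lam s ^ 2 := by
    intro s
    exact inner_triple _ _ _ _ _ _ (hTT s) (hNN s) (hBB s) (hTN s) (hTB s) (hNB s)
  -- s1, s2, s3 on the interval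
  have hs1fun : s1 κ lam = fun u => 2 * lam u * (κ u * (1 + lam u ^ 2)) := by
    funext u; simp only [s1]; ring
  have hs1' : ∀ s, HasDerivAt (s1 κ lam)
      (2 * deriv lam s * (κ s * (1 + lam s ^ 2))
        + 2 * lam s * (deriv κ s * (1 + lam s ^ 2) + κ s * (2 * lam s * deriv lam s))) s := by
    intro s
    rw [hs1fun]
    have h := ((hld s).hasDerivAt.const_mul 2).mul (hg' s)
    convert h using 1 <;> first | rfl | ring
  have hds1 : ∀ s ∈ Icc (0:ℝ) L, deriv (s1 κ lam) s = 2 * deriv lam s := by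
    intro s hs
    rw [(hs1' s).deriv, hg1 s hs, hD0 s hs]; ring
  have hs2v : ∀ s ∈ Icc (0:ℝ) L, s2 κ lam s = 2 * deriv lam s * (1 + lam s ^ 2) := by
    intro s hs
    have hknz := hκ0 s
    have hgs := hg1 s hs
    simp only [s2]
    rw [hds1 s hs]
    field_simp
    linear_combination -deriv lam s * hgs
  have hs3v : ∀ s ∈ Icc (0:ℝ) L, s3 κ lam s = 1 - lam s ^ 2 := by
    intro s hs
    have hgs := hg1 s hs
    simp only [s3]
    linear_combination (1 - lam s ^ 2) * hgs
  have part1 : ∀ s ∈ Icc (0:ℝ) L, ⟪Jvec κ lam T N B s, Jvec κ lam T N B s⟫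
      = (4 * deriv lam s ^ 2 + 1) * (1 + lam s ^ 2) ^ 2 := by
    intro s hs
    have hs1v : s1 κ lam s = 2 * lam s := by
      have : s1 κ lam s = 2 * lam s * (κ s * (1 + lam s ^ 2)) := by rw [hs1fun]
      rw [this, hg1 s hs]; ring
    rw [hJJ s, hs1v, hs2v s hs, hs3v s hs]; ring
  refine ⟨part1, ?_⟩
  rintro ⟨C, hC⟩
  -- the function F = (4λ'²+1)(1+λ²)² is constant C on the interval
  have hFC : ∀ s ∈ Icc (0:ℝ) L,
      (fun u => (4 * deriv lam u ^ 2 + 1) * (1 + lam u ^ 2) ^ 2) s = C := by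
    intro s hs
    exact (part1 s hs).symm.trans (hC s hs)
  have hF' : ∀ s, HasDerivAt (fun u => (4 * deriv lam u ^ 2 + 1) * (1 + lam u ^ 2) ^ 2)
      (8 * deriv lam s * deriv (deriv lam) s * (1 + lam s ^ 2) ^ 2
        + (4 * deriv lam s ^ 2 + 1) * (2 * (1 + lam s ^ 2) * (2 * lam s * deriv lam s))) s := by
    intro s
    have h1 : HasDerivAt (fun u => 4 * deriv lam u ^ 2 + 1)
        (8 * deriv lam s * deriv (deriv lam) s) s := by
      have h := (((hdld s).hasDerivAt.fun_pow 2).const_mul 4).add_const 1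
      convert h using 1 <;> first | rfl | (push_cast; ring)
    have h2 : HasDerivAt (fun u => (1 + lam u ^ 2) ^ 2)
        (2 * (1 + lam s ^ 2) * (2 * lam s * deriv lam s)) s := by
      have h := (hsq s).fun_pow 2
      convert h using 1 <;> first | rfl | (push_cast; ring)
    have h := h1.mul h2
    convert h using 1 <;> first | rfl | ring
  have hFd : Differentiable ℝ (fun u => (4 * deriv lam u ^ 2 + 1) * (1 + lam u ^ 2) ^ 2) :=
    fun s => (hF' s).differentiableAt
  have hdF0 : ∀ s ∈ Icc (0:ℝ) L,
      deriv (fun u => (4 * deriv lam u ^ 2 + 1) * (1 + lam u ^ 2) ^ 2) s = 0 := fun s hs =>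
    deriv_eqOn_const (hFd s) hFC hs (hUD s hs)
  -- the q-part of a3
  have hq_cd : ContDiff ℝ (⊤ : ℕ∞) (fun u => deriv κ u / κ u * (2 * lam u * (1 + lam u ^ 2))) := by
    fun_prop (disch := intros; apply hκ0)
  have hqd : Differentiable ℝ (fun u => deriv κ u / κ u * (2 * lam u * (1 + lam u ^ 2))) :=
    hq_cd.differentiable (by simp)
  have hdq_cd : ContDiff ℝ (⊤ : ℕ∞) (deriv (fun u => deriv κ u / κ u * (2 * lam u * (1 + lam u ^ 2)))) :=
    (contDiff_succ_iff_deriv.mp hq_cd).2.2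
  have hrd : Differentiable ℝ
      (fun u => deriv κ u / κ u * (2 * lam u * (1 + lam u ^ 2)) + 4 * lam u ^ 2 * deriv lam u) := by
    apply hqd.add
    fun_prop
  have hr0 : ∀ s ∈ Icc (0:ℝ) L,
      deriv κ s / κ s * (2 * lam s * (1 + lam s ^ 2)) + 4 * lam s ^ 2 * deriv lam s = 0 := by
    intro s hs
    have hknz := hκ0 s
    have hD := hD0 s hs
    field_simp
    linear_combination (2 * lam s) * hD
  have hdr0 : ∀ s ∈ Icc (0:ℝ) L,
      deriv (fun u => deriv κ u / κ u * (2 * lam u * (1 + lam u ^ 2))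
        + 4 * lam u ^ 2 * deriv lam u) s = 0 := fun s hs =>
    deriv_eqOn_const (hrd s) hr0 hs (hUD s hs)
  have h4l : ∀ s, HasDerivAt (fun u => 4 * lam u ^ 2 * deriv lam u)
      (8 * lam s * deriv lam s ^ 2 + 4 * lam s ^ 2 * deriv (deriv lam) s) s := by
    intro s
    have h := (((hld s).hasDerivAt.fun_pow 2).const_mul 4).mul (hdld s).hasDerivAt
    convert h using 1 <;> first | rfl | (push_cast; ring)
  have hdq_on : ∀ s ∈ Icc (0:ℝ) L,
      deriv (fun u => deriv κ u / κ u * (2 * lam u * (1 + lam u ^ 2))) s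
        = -(8 * lam s * deriv lam s ^ 2 + 4 * lam s ^ 2 * deriv (deriv lam) s) := by
    intro s hs
    have hsum : HasDerivAt
        (fun u => deriv κ u / κ u * (2 * lam u * (1 + lam u ^ 2)) + 4 * lam u ^ 2 * deriv lam u)
        (deriv (fun u => deriv κ u / κ u * (2 * lam u * (1 + lam u ^ 2))) s
          + (8 * lam s * deriv lam s ^ 2 + 4 * lam s ^ 2 * deriv (deriv lam) s)) s :=
      ((hqd s).hasDerivAt).add (h4l s)
    have h0 := hdr0 s hs
    rw [hsum.deriv] at h0
    linarith
  -- second derivative of P = 2λ(1+λ²)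
  have hP_cd : ContDiff ℝ (⊤ : ℕ∞) (fun u => 2 * lam u * (1 + lam u ^ 2)) := by fun_prop
  have hP' : ∀ s, HasDerivAt (fun u => 2 * lam u * (1 + lam u ^ 2))
      (2 * deriv lam s + 6 * lam s ^ 2 * deriv lam s) s := by
    intro s
    have h := ((hld s).hasDerivAt.const_mul 2).mul (hsq s)
    convert h using 1 <;> first | rfl | ring
  have hdPfun : deriv (fun u => 2 * lam u * (1 + lam u ^ 2))
      = fun s => 2 * deriv lam s + 6 * lam s ^ 2 * deriv lam s :=
    funext fun s => (hP' s).deriv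
  have hdP_cd : ContDiff ℝ (⊤ : ℕ∞) (deriv (fun u => 2 * lam u * (1 + lam u ^ 2))) :=
    (contDiff_succ_iff_deriv.mp hP_cd).2.2
  have hddP_cd : ContDiff ℝ (⊤ : ℕ∞) (deriv (deriv (fun u => 2 * lam u * (1 + lam u ^ 2)))) :=
    (contDiff_succ_iff_deriv.mp hdP_cd).2.2
  have hddP : ∀ s, deriv (deriv (fun u => 2 * lam u * (1 + lam u ^ 2))) s
      = 2 * deriv (deriv lam) s + 12 * lam s * deriv lam s ^ 2
        + 6 * lam s ^ 2 * deriv (deriv lam) s := by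
    intro s
    rw [hdPfun]
    have h1 : HasDerivAt (fun u => 2 * deriv lam u + 6 * lam u ^ 2 * deriv lam u)
        (2 * deriv (deriv lam) s + 12 * lam s * deriv lam s ^ 2
          + 6 * lam s ^ 2 * deriv (deriv lam) s) s := by
      have h := ((hdld s).hasDerivAt.const_mul 2).add
        ((((hld s).hasDerivAt.fun_pow 2).const_mul 6).mul (hdld s).hasDerivAt)
      convert h using 1 <;> first | rfl | (push_cast; ring)
    exact h1.deriv
  -- formula for a3 on the interval
  have ha3form : ∀ s ∈ Icc (0:ℝ) L, a3 κ lam s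
      = -(lam s + 4 * lam s * deriv lam s ^ 2
          + 2 * deriv (deriv lam) s * (1 + lam s ^ 2)) := by
    intro s hs
    have hgs := hg1 s hs
    have hg2 : κ s ^ 2 * (1 + lam s ^ 2) ^ 2 = 1 := by
      linear_combination (κ s * (1 + lam s ^ 2) + 1) * hgs
    simp only [a3]
    rw [hdq_on s hs, hddP s]
    linear_combination (-(lam s)) * hg2
  -- λ'·a₃ = 0 on the interval
  have hZ : ∀ s ∈ Icc (0:ℝ) L, deriv lam s * a3 κ lam s = 0 := by
    intro s hs
    have hF0 := hdF0 s hs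
    rw [(hF' s).deriv] at hF0
    have hX : 4 * deriv lam s * (1 + lam s ^ 2)
        * (lam s + 4 * lam s * deriv lam s ^ 2
          + 2 * deriv (deriv lam) s * (1 + lam s ^ 2)) = 0 := by
      linear_combination hF0
    rw [ha3form s hs]
    rcases mul_eq_zero.mp hX with h | h
    · rcases mul_eq_zero.mp h with h' | h'
      · have : deriv lam s = 0 := by linarith
        rw [this]; ring
      · exact absurd h' (hone s).ne'
    · rw [h]; ring
  -- continuity and differentiability of a3
  have ha3fun : a3 κ lam = fun s => -(κ s ^ 2 * (1 + lam s ^ 2) ^ 2 * lam s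
      + deriv (fun u => deriv κ u / κ u * (2 * lam u * (1 + lam u ^ 2))) s
      + deriv (deriv (fun u => 2 * lam u * (1 + lam u ^ 2))) s) := rfl
  have ha3cont : Continuous (a3 κ lam) := by
    rw [ha3fun]
    have h1 : Continuous (deriv (fun u => deriv κ u / κ u * (2 * lam u * (1 + lam u ^ 2)))) :=
      hdq_cd.continuous
    have h2 : Continuous (deriv (deriv (fun u => 2 * lam u * (1 + lam u ^ 2)))) :=
      hddP_cd.continuous
    have h3 : Continuous κ := hκsm.continuous
    have h4 : Continuous lam := hlam_cd.continuous
    fun_prop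
  have ha3d : Differentiable ℝ (a3 κ lam) := by
    rw [ha3fun]
    have h1 : Differentiable ℝ (deriv (fun u => deriv κ u / κ u * (2 * lam u * (1 + lam u ^ 2)))) :=
      hdq_cd.differentiable (by simp)
    have h2 : Differentiable ℝ (deriv (deriv (fun u => 2 * lam u * (1 + lam u ^ 2)))) :=
      hddP_cd.differentiable (by simp)
    fun_prop
  -- a3 vanishes on the interval
  have ha3zero : ∀ s ∈ Icc (0:ℝ) L, a3 κ lam s = 0 := by
    intro s hs
    by_contra hne
    have hconst : ∀ f : ℝ → ℝ, Differentiable ℝ f → (∀ x ∈ Icc (0:ℝ) L, deriv f x = 0) →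
        ∀ x ∈ Icc (0:ℝ) L, f x = f 0 := by
      intro f hf hf0
      apply constant_of_derivWithin_zero hf.differentiableOn
      intro x hx
      have hxI : x ∈ Icc (0:ℝ) L := Ico_subset_Icc_self hx
      rw [(hf x).derivWithin (hUD x hxI)]
      exact hf0 x hxI
    have hloc : ∀ x ∈ Icc (0:ℝ) L, a3 κ lam x * deriv (a3 κ lam) x = 0 := by
      intro x hx
      by_cases hax : a3 κ lam x = 0
      · rw [hax, zero_mul]
      · obtain ⟨ε, hε, hball⟩ := Metric.eventually_nhds_iff.mp
          (ha3cont.continuousAt.eventually_ne hax)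
        have hlt : max 0 (x - ε/2) < min L (x + ε/2) := by
          apply max_lt <;> apply lt_min <;> linarith [hx.1, hx.2]
        have hAsub : ∀ y ∈ Icc (max 0 (x - ε/2)) (min L (x + ε/2)),
            y ∈ Icc (0:ℝ) L ∧ dist y x < ε := by
          intro y hy
          obtain ⟨h1, h2⟩ := hy
          rw [max_le_iff] at h1
          rw [le_min_iff] at h2
          refine ⟨⟨h1.1, h2.1⟩, ?_⟩
          rw [Real.dist_eq, abs_lt]
          constructor <;> linarith
        have hxA : x ∈ Icc (max 0 (x - ε/2)) (min L (x + ε/2)) :=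
          ⟨max_le hx.1 (by linarith), le_min hx.2 (by linarith)⟩
        have hUA : UniqueDiffOn ℝ (Icc (max 0 (x - ε/2)) (min L (x + ε/2))) := uniqueDiffOn_Icc hlt
        have hdl0 : ∀ y ∈ Icc (max 0 (x - ε/2)) (min L (x + ε/2)), deriv lam y = 0 := by
          intro y hy
          obtain ⟨hyI, hyd⟩ := hAsub y hy
          rcases mul_eq_zero.mp (hZ y hyI) with h | h
          · exact h
          · exact absurd h (hball hyd)
        have hEq : Set.EqOn (a3 κ lam) (fun y => -lam y) (Icc (max 0 (x - ε/2)) (min L (x + ε/2))) := by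
          intro y hy
          obtain ⟨hyI, _⟩ := hAsub y hy
          have hddl : deriv (deriv lam) y = 0 := deriv_eqOn_const (hdld y) hdl0 hy (hUA y hy)
          rw [ha3form y hyI, hdl0 y hy, hddl]; ring
        have hd := deriv_eqOn_of_eqOn (ha3d x) ((hld x).neg) hEq hxA (hUA x hxA)
        rw [hd, (hld x).hasDerivAt.neg.deriv, hdl0 x hxA]; ring
    have hsqd : ∀ x, HasDerivAt (fun u => a3 κ lam u ^ 2) (2 * a3 κ lam x * deriv (a3 κ lam) x) x := by
      intro x
      have h := (ha3d x).hasDerivAt.fun_pow 2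
      convert h using 1 <;> first | rfl | (push_cast; ring)
    have hsq0 : ∀ x ∈ Icc (0:ℝ) L, deriv (fun u => a3 κ lam u ^ 2) x = 0 := by
      intro x hx
      rw [(hsqd x).deriv]
      linear_combination 2 * hloc x hx
    have hK := hconst _ (fun x => (hsqd x).differentiableAt) hsq0
    have hall : ∀ x ∈ Icc (0:ℝ) L, deriv lam x = 0 := by
      intro x hx
      have hx2 : a3 κ lam x ^ 2 = a3 κ lam s ^ 2 := (hK x hx).trans (hK s hs).symm
      have hax : a3 κ lam x ≠ 0 := by
        intro h0
        apply hne
        rw [h0] at hx2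
        have : a3 κ lam s ^ 2 = 0 := by linarith [hx2]
        exact (pow_eq_zero_iff two_ne_zero).mp this
      rcases mul_eq_zero.mp (hZ x hx) with h | h
      · exact h
      · exact absurd h hax
    have hlc := hconst lam hld hall
    obtain ⟨x₁, hx₁, x₂, hx₂, hne'⟩ := hlamnonconst
    exact hne' ((hlc x₁ hx₁).trans (hlc x₂ hx₂).symm)
  -- conclusion
  intro s hs
  have h2 := ha2_0 s hs
  have h3 := ha3zero s hs
  have hda2 : deriv (a2 κ lam) s = 0 := deriv_eqOn_const (ha2d s) ha2_0 hs (hUD s hs)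
  have hda3 : deriv (a3 κ lam) s = 0 := deriv_eqOn_const (ha3d s) ha3zero hs (hUD s hs)
  refine ⟨h2, h3, ?_, ?_, ?_⟩
  · simp [b0vec, ha1 s hs, h2, h3]
  · simp [f1, hda2, ha1 s hs, h3]
  · simp [f2, hda3, h2]
end
end
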